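/- arXiv:2512.12346 — 9 statements merged into one kernel-verified Lean document; each statement's English description precedes it below -/
import Mathlib

section
/- For every integer m ≥ 2 and every nonnegative integer n, the number of partitions of n in which each part occurs fewer than m times equals the number of partitions of n into parts not divisible by m. -/
/-!
Both sides count elements of `Nat.Partition n`, for which Mathlib proves Glaisher's theorem by
comparing generating functions: `∏ (1 - X ^ (m * i)) / (1 - X ^ i)` is both
`∏ (1 + X ^ i + ⋯ + X ^ ((m - 1) * i))` and `∏_{m ∤ i} 1 / (1 - X ^ i)`.
-/

open Finset

namespace Nat.Partition

def equivMultisetSubtype (n : ℕ) (P : Multiset ℕ → Prop) :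
    {s : Multiset ℕ // s.sum = n ∧ (∀ a ∈ s, 0 < a) ∧ P s} ≃ {p : n.Partition // P p.parts} where
  toFun s := ⟨⟨s.1, s.2.2.1 _, s.2.1⟩, s.2.2.2⟩
  invFun p := ⟨p.1.parts, p.1.parts_sum, fun _ ↦ p.1.parts_pos, p.2⟩

theorem natCard_subtype_eq_card_restricted (n : ℕ) (P : ℕ → Prop) [DecidablePred P] :
    Nat.card {p : n.Partition // ∀ a ∈ p.parts, P a} = #(restricted n P) := by
  rw [restricted, ← Fintype.card_subtype, Nat.card_eq_fintype_card]

theorem natCard_subtype_eq_card_countRestricted (n : ℕ) {m : ℕ} (hm : 0 < m) :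
    Nat.card {p : n.Partition // ∀ a, p.parts.count a < m} = #(countRestricted n m) := by
  rw [countRestricted, ← Fintype.card_subtype, ← Nat.card_eq_fintype_card]
  refine Nat.card_congr (Equiv.subtypeEquivRight fun p ↦ ⟨fun h a _ ↦ h a, fun h a ↦ ?_⟩)
  by_cases ha : a ∈ p.parts
  · exact h a ha
  · rwa [Multiset.count_eq_zero_of_notMem ha]

end Nat.Partition

open Nat.Partition in
/-- Glaisher's theorem: for `m ≥ 2`, the number of partitions of `n` in which each part
occurs fewer than `m` times equals the number of partitions of `n` into parts not
divisible by `m`. Partitions are modeled as multisets of positive integers summing to `n`. -/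
theorem glaisher_theorem (m : ℕ) (hm : 2 ≤ m) (n : ℕ) :
    Nat.card {s : Multiset ℕ // s.sum = n ∧ (∀ a ∈ s, 0 < a) ∧ ∀ a, s.count a < m} =
    Nat.card {s : Multiset ℕ // s.sum = n ∧ (∀ a ∈ s, 0 < a) ∧ ∀ a ∈ s, ¬ m ∣ a} := by
  have hm0 : 0 < m := by omega
  rw [Nat.card_congr (equivMultisetSubtype n _), Nat.card_congr (equivMultisetSubtype n _),
    natCard_subtype_eq_card_countRestricted n hm0, natCard_subtype_eq_card_restricted,
    card_restricted_eq_card_countRestricted n hm0]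
end

section
/- For every positive integer n, the number of partitions of n into distinct parts equals the number of partitions of n+1 whose largest part is even and in which all parts not exceeding half of the largest part are distinct. -/
/-!
Glaisher's bijection with a threshold `T`. Splitting every part `2 ^ i * v` (`v` odd) into
`2 ^ i` copies of `v` is inverted, on partitions with parts `≤ 2 * T` whose parts `≤ T` are
distinct, by merging: `c` copies of an odd `v ≤ 2 * T` are spread along the chain
`v, 2 * v, …, 2 ^ a * v`, where `2 ^ a * v` is the unique member of `(T, 2 * T]`, putting the
binary digits of `c` below the top and the quotient `c / 2 ^ a` on the top. So partitions into
odd parts `≤ 2 * T` correspond to partitions into parts `≤ 2 * T` with distinct parts `≤ T`.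

For `T = n` this is Euler's bijection between odd and distinct partitions of `n`. For `C(n + 1)`,
raise the largest part `2 * j - 1` of an odd partition of `n` to `2 * j` and merge the remaining
parts with threshold `j`.
-/

namespace AKY

open Finset

def chainCounts (a c i : ℕ) : ℕ :=
  if i < a then c / 2 ^ i % 2 else if i = a then c / 2 ^ a else 0

theorem sum_two_pow_mul_bit (a c : ℕ) : ∑ i ∈ range a, 2 ^ i * (c / 2 ^ i % 2) = c % 2 ^ a := by
  induction a with
  | zero => simp [Nat.mod_one]
  | succ a ih => rw [sum_range_succ, ih, Nat.mod_pow_succ]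

theorem sum_chainCounts (a c : ℕ) : ∑ i ∈ range (a + 1), 2 ^ i * chainCounts a c i = c := by
  have low : ∑ i ∈ range a, 2 ^ i * chainCounts a c i = c % 2 ^ a := by
    rw [← sum_two_pow_mul_bit]
    exact sum_congr rfl fun i hi => by rw [chainCounts, if_pos (mem_range.1 hi)]
  rw [sum_range_succ, low, chainCounts, if_neg (lt_irrefl a), if_pos rfl, Nat.mod_add_div]

theorem digits_div_two_pow {a : ℕ} {d : ℕ → ℕ} (hd : ∀ i < a, d i ≤ 1) (t : ℕ) :
    (∀ b < a, (∑ i ∈ range a, 2 ^ i * d i + 2 ^ a * t) / 2 ^ b % 2 = d b) ∧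
      (∑ i ∈ range a, 2 ^ i * d i + 2 ^ a * t) / 2 ^ a = t := by
  induction a generalizing d with
  | zero => simp
  | succ a ih =>
    set c' := ∑ i ∈ range a, 2 ^ i * d (i + 1) + 2 ^ a * t
    have hc : ∑ i ∈ range (a + 1), 2 ^ i * d i + 2 ^ (a + 1) * t = d 0 + 2 * c' := by
      simp only [c', sum_range_succ', pow_succ', mul_add, mul_sum, mul_assoc]
      ring
    have half : (d 0 + 2 * c') / 2 = c' := by have := hd 0 (by omega); omega
    have shift : ∀ b, (d 0 + 2 * c') / 2 ^ (b + 1) = c' / 2 ^ b := fun b => by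
      rw [pow_succ', ← Nat.div_div_eq_div_mul, half]
    obtain ⟨ih_bits, ih_top⟩ := ih (d := fun i => d (i + 1)) fun i hi => hd (i + 1) (by omega)
    rw [hc, shift]
    refine ⟨fun b hb => ?_, ih_top⟩
    rcases b with _ | b
    · have := hd 0 (by omega)
      rw [pow_zero, Nat.div_one]
      omega
    · rw [shift]; exact ih_bits b (by omega)

theorem chainCounts_sum {a : ℕ} {d : ℕ → ℕ} (hd : ∀ i < a, d i ≤ 1)
    (hd' : ∀ i, a < i → d i = 0) : chainCounts a (∑ i ∈ range (a + 1), 2 ^ i * d i) = d := by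
  funext i
  obtain ⟨bits, top⟩ := digits_div_two_pow hd (d a)
  rw [sum_range_succ, chainCounts]
  split_ifs with hlt heq
  · exact bits i hlt
  · rw [top, heq]
  · exact (hd' i (by omega)).symm

theorem exists_two_pow_mul_mem_Ioc {T v : ℕ} (hv : 0 < v) (hvT : v ≤ 2 * T) :
    ∃ a, T < 2 ^ a * v ∧ 2 ^ a * v ≤ 2 * T := by
  have hq : 2 * T / v ≠ 0 := (Nat.div_pos hvT hv).ne'
  refine ⟨Nat.log 2 (2 * T / v), ?_, (Nat.le_div_iff_mul_le hv).1 (Nat.pow_log_le_self 2 hq)⟩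
  have := (Nat.div_lt_iff_lt_mul hv).1 (Nat.lt_pow_succ_log_self one_lt_two (2 * T / v))
  rw [pow_succ] at this
  linarith

theorem two_pow_mul_le_iff {T a v : ℕ} (hT : T < 2 ^ a * v) (h2T : 2 ^ a * v ≤ 2 * T) (i : ℕ) :
    (2 ^ i * v ≤ T ↔ i < a) ∧ (2 ^ i * v ≤ 2 * T ↔ i ≤ a) := by
  have mono : ∀ {i j}, i ≤ j → 2 ^ i * v ≤ 2 ^ j * v := fun h =>
    Nat.mul_le_mul_right v (Nat.pow_le_pow_right two_pos h)
  have double : ∀ i, 2 ^ (i + 1) * v = 2 * (2 ^ i * v) := fun i => by ring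
  constructor <;> constructor
  · intro h; by_contra! hai; have := mono hai; omega
  · intro h; have := mono (Nat.succ_le_of_lt h); rw [double] at this; omega
  · intro h; by_contra! hai; have := mono (Nat.succ_le_of_lt hai); rw [double] at this; omega
  · intro h; exact (mono h).trans h2T

theorem odd_ordCompl_two {m : ℕ} (hm : m ≠ 0) : Odd (ordCompl[2] m) :=
  Nat.odd_iff.2 (Nat.two_dvd_ne_zero.1 (Nat.not_dvd_ordCompl Nat.prime_two hm))

theorem ordCompl_two_pow_mul {v : ℕ} (hv : Odd v) (i : ℕ) : ordCompl[2] (2 ^ i * v) = v :=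
  Nat.ordCompl_pow_mul_of_not_dvd i Nat.prime_two hv.not_two_dvd_nat

theorem ordProj_two_pow_mul {v : ℕ} (hv : Odd v) (i : ℕ) : ordProj[2] (2 ^ i * v) = 2 ^ i := by
  have h := Nat.ordProj_mul_ordCompl_eq_self (2 ^ i * v) 2
  rw [ordCompl_two_pow_mul hv] at h
  exact Nat.eq_of_mul_eq_mul_right hv.pos h

theorem two_pow_mul_odd_inj {i j v w : ℕ} (hv : Odd v) (hw : Odd w) :
    2 ^ i * v = 2 ^ j * w ↔ i = j ∧ v = w := by
  refine ⟨fun h => ⟨?_, ?_⟩, fun ⟨hij, hvw⟩ => hij ▸ hvw ▸ rfl⟩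
  · have := congrArg (fun m => ordProj[2] m) h
    simp only [ordProj_two_pow_mul hv, ordProj_two_pow_mul hw] at this
    exact Nat.pow_right_injective le_rfl this
  · simpa only [ordCompl_two_pow_mul hv, ordCompl_two_pow_mul hw] using
      congrArg (fun m => ordCompl[2] m) h

def oddSplit (s : Multiset ℕ) : Multiset ℕ :=
  s.bind fun m => Multiset.replicate (ordProj[2] m) (ordCompl[2] m)

theorem sum_oddSplit (s : Multiset ℕ) : (oddSplit s).sum = s.sum := by
  simp [oddSplit, Multiset.sum_bind, Nat.ordProj_mul_ordCompl_eq_self]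

theorem exists_of_mem_oddSplit {v : ℕ} {s : Multiset ℕ} (h : v ∈ oddSplit s) :
    ∃ m ∈ s, ordCompl[2] m = v := by
  simp only [oddSplit, Multiset.mem_bind, Multiset.mem_replicate] at h
  obtain ⟨m, hm, -, rfl⟩ := h
  exact ⟨m, hm, rfl⟩

theorem count_replicate_ordCompl_two {v m K : ℕ} (hv : Odd v) (hm : m < 2 ^ K * v) :
    (Multiset.replicate (ordProj[2] m) (ordCompl[2] m)).count v =
      ∑ i ∈ range K, if 2 ^ i * v = m then 2 ^ i else 0 := by
  rw [Multiset.count_replicate]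
  rcases eq_or_ne m 0 with rfl | hm0
  · simp [hv.pos.ne, hv.pos.ne']
  obtain ⟨f, w, hw, rfl⟩ := Nat.exists_eq_two_pow_mul_odd hm0
  rw [ordCompl_two_pow_mul hw, ordProj_two_pow_mul hw]
  simp only [two_pow_mul_odd_inj hv hw]
  by_cases hvw : v = w
  · subst hvw
    have hfK : f < K := (Nat.pow_lt_pow_iff_right (by norm_num)).1
      (Nat.lt_of_mul_lt_mul_right hm)
    simp [hfK]
  · simp [hvw, Ne.symm hvw]

theorem count_oddSplit {v K : ℕ} {s : Multiset ℕ} (hv : Odd v) (hK : ∀ m ∈ s, m < 2 ^ K * v) :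
    (oddSplit s).count v = ∑ i ∈ range K, 2 ^ i * s.count (2 ^ i * v) := by
  induction s using Multiset.induction with
  | empty => simp [oddSplit]
  | cons m s ih =>
    rw [oddSplit, Multiset.cons_bind, Multiset.count_add, ← oddSplit,
      ih fun x hx => hK x (Multiset.mem_cons_of_mem hx),
      count_replicate_ordCompl_two hv (hK m (Multiset.mem_cons_self m s)), add_comm,
      ← sum_add_distrib]
    refine sum_congr rfl fun i _ => ?_
    rw [Multiset.count_cons]
    split_ifs <;> ring

theorem odd_of_mem_oddSplit {v : ℕ} {s : Multiset ℕ} (hs : ∀ m ∈ s, 0 < m) (h : v ∈ oddSplit s) :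
    Odd v := by
  obtain ⟨m, hm, rfl⟩ := exists_of_mem_oddSplit h
  exact odd_ordCompl_two (hs m hm).ne'

theorem le_of_mem_oddSplit {v B : ℕ} {s : Multiset ℕ} (hs : ∀ m ∈ s, m ≤ B) (h : v ∈ oddSplit s) :
    v ≤ B := by
  obtain ⟨m, hm, rfl⟩ := exists_of_mem_oddSplit h
  exact (Nat.ordCompl_le m 2).trans (hs m hm)

def mergeCount (T : ℕ) (o : Multiset ℕ) (m : ℕ) : ℕ :=
  if m ≤ T then o.count (ordCompl[2] m) / ordProj[2] m % 2
  else o.count (ordCompl[2] m) / ordProj[2] m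

def thresholdMerge (T : ℕ) (o : Multiset ℕ) : Multiset ℕ :=
  ∑ m ∈ Icc 1 (2 * T), Multiset.replicate (mergeCount T o m) m

theorem count_thresholdMerge (T : ℕ) (o : Multiset ℕ) (m : ℕ) :
    (thresholdMerge T o).count m = if m ∈ Icc 1 (2 * T) then mergeCount T o m else 0 := by
  simp only [thresholdMerge, Multiset.count_sum', Multiset.count_replicate, sum_ite_eq']

theorem mem_Icc_of_mem_thresholdMerge {T m : ℕ} {o : Multiset ℕ} (h : m ∈ thresholdMerge T o) :
    m ∈ Icc 1 (2 * T) := by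
  rw [← Multiset.count_pos, count_thresholdMerge] at h
  split_ifs at h with hm
  · exact hm
  · exact absurd h (lt_irrefl 0)

theorem count_thresholdMerge_le_one {T m : ℕ} (o : Multiset ℕ) (hm : m ≤ T) :
    (thresholdMerge T o).count m ≤ 1 := by
  rw [count_thresholdMerge, mergeCount, if_pos hm]
  split_ifs <;> omega

theorem count_two_pow_mul_thresholdMerge {T a v : ℕ} (o : Multiset ℕ) (hv : Odd v)
    (hT : T < 2 ^ a * v) (h2T : 2 ^ a * v ≤ 2 * T) (i : ℕ) :
    (thresholdMerge T o).count (2 ^ i * v) = chainCounts a (o.count v) i := by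
  obtain ⟨hle, hle2⟩ := two_pow_mul_le_iff hT h2T i
  have hpos : 1 ≤ 2 ^ i * v := Nat.mul_pos (by positivity) hv.pos
  rw [count_thresholdMerge, mergeCount, ordCompl_two_pow_mul hv, ordProj_two_pow_mul hv,
    chainCounts]
  simp only [mem_Icc, hpos, hle, hle2, true_and]
  rcases lt_trichotomy i a with h | rfl | h
  · simp [h, h.le]
  · simp
  · simp [h.not_ge, h.not_gt, h.ne']

theorem oddSplit_thresholdMerge {T : ℕ} {o : Multiset ℕ} (hodd : ∀ v ∈ o, Odd v)
    (hle : ∀ v ∈ o, v ≤ 2 * T) : oddSplit (thresholdMerge T o) = o := by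
  have merged_le : ∀ m ∈ thresholdMerge T o, m ≤ 2 * T := fun m hm =>
    (mem_Icc.1 (mem_Icc_of_mem_thresholdMerge hm)).2
  ext v
  by_cases hv : Odd v ∧ v ≤ 2 * T
  · obtain ⟨hv, hvT⟩ := hv
    obtain ⟨a, hT, h2T⟩ := exists_two_pow_mul_mem_Ioc hv.pos hvT
    have hK : ∀ m ∈ thresholdMerge T o, m < 2 ^ (a + 1) * v := fun m hm => by
      have := merged_le m hm; rw [pow_succ]; linarith
    simp only [count_oddSplit hv hK, count_two_pow_mul_thresholdMerge o hv hT h2T,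
      sum_chainCounts]
  · have merged_pos : ∀ m ∈ thresholdMerge T o, 0 < m := fun m hm =>
      (mem_Icc.1 (mem_Icc_of_mem_thresholdMerge hm)).1
    rw [Multiset.count_eq_zero.2 fun h => hv ⟨hodd v h, hle v h⟩, Multiset.count_eq_zero.2
      fun h => hv ⟨odd_of_mem_oddSplit merged_pos h, le_of_mem_oddSplit merged_le h⟩]

theorem thresholdMerge_oddSplit {T : ℕ} {s : Multiset ℕ} (hpos : ∀ m ∈ s, 0 < m)
    (hle : ∀ m ∈ s, m ≤ 2 * T) (hdist : ∀ m ≤ T, s.count m ≤ 1) :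
    thresholdMerge T (oddSplit s) = s := by
  ext m
  by_cases hm : m ∈ Icc 1 (2 * T)
  · obtain ⟨hm1, hm2⟩ := mem_Icc.1 hm
    obtain ⟨j, v, hv, rfl⟩ := Nat.exists_eq_two_pow_mul_odd (Nat.one_le_iff_ne_zero.1 hm1)
    obtain ⟨a, hT, h2T⟩ := exists_two_pow_mul_mem_Ioc hv.pos
      ((Nat.le_mul_of_pos_left v (by positivity)).trans hm2)
    have bounds := two_pow_mul_le_iff hT h2T
    have hK : ∀ m ∈ s, m < 2 ^ (a + 1) * v := fun m hm => by
      have := hle m hm; rw [pow_succ]; linarith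
    have low : ∀ i < a, s.count (2 ^ i * v) ≤ 1 := fun i hi => hdist _ ((bounds i).1.2 hi)
    have high : ∀ i, a < i → s.count (2 ^ i * v) = 0 := fun i hi =>
      Multiset.count_eq_zero.2 fun h => absurd ((bounds i).2.1 (hle _ h)) (by omega)
    rw [count_two_pow_mul_thresholdMerge _ hv hT h2T, count_oddSplit hv hK]
    exact congrFun (chainCounts_sum low high) j
  · rw [count_thresholdMerge, if_neg hm, eq_comm, Multiset.count_eq_zero]
    exact fun h => hm (mem_Icc.2 ⟨hpos m h, hle m h⟩)

theorem sum_thresholdMerge {T : ℕ} {o : Multiset ℕ} (hodd : ∀ v ∈ o, Odd v)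
    (hle : ∀ v ∈ o, v ≤ 2 * T) : (thresholdMerge T o).sum = o.sum := by
  rw [← sum_oddSplit, oddSplit_thresholdMerge hodd hle]

def distinctPartitions (n : ℕ) : Set (Multiset ℕ) :=
  {s | s.sum = n ∧ (∀ a ∈ s, 0 < a) ∧ ∀ a, s.count a ≤ 1}

def oddPartitions (n : ℕ) : Set (Multiset ℕ) :=
  {s | s.sum = n ∧ ∀ a ∈ s, Odd a}

def evenMaxPartitions (n : ℕ) : Set (Multiset ℕ) :=
  {s | s.sum = n ∧ (∀ a ∈ s, 0 < a) ∧
    ∃ j : ℕ, 2 * j ∈ s ∧ (∀ b ∈ s, b ≤ 2 * j) ∧ ∀ b ∈ s, b ≤ j → s.count b ≤ 1}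

theorem bijOn_thresholdMerge (n : ℕ) :
    Set.BijOn (thresholdMerge n) (oddPartitions n) (distinctPartitions n) := by
  have le_two_mul : ∀ {s : Multiset ℕ}, s.sum = n → ∀ a ∈ s, a ≤ 2 * n := fun hs a ha => by
    have := Multiset.le_sum_of_mem ha; omega
  refine Set.InvOn.bijOn (f' := oddSplit) ⟨?_, ?_⟩ ?_ ?_
  · rintro o ⟨hsum, hodd⟩
    exact oddSplit_thresholdMerge hodd (le_two_mul hsum)
  · rintro s ⟨hsum, hpos, hdist⟩
    exact thresholdMerge_oddSplit hpos (le_two_mul hsum) fun m _ => hdist m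
  · rintro o ⟨hsum, hodd⟩
    have hmsum : (thresholdMerge n o).sum = n := by
      rw [sum_thresholdMerge hodd (le_two_mul hsum), hsum]
    refine ⟨hmsum, fun a ha => (mem_Icc.1 (mem_Icc_of_mem_thresholdMerge ha)).1, fun a => ?_⟩
    by_cases han : a ≤ n
    · exact count_thresholdMerge_le_one o han
    · rw [Multiset.count_eq_zero.2 fun ha => han (hmsum ▸ Multiset.le_sum_of_mem ha)]
      exact zero_le_one
  · rintro s ⟨hsum, hpos, -⟩
    exact ⟨(sum_oddSplit s).trans hsum, fun a ha => odd_of_mem_oddSplit hpos ha⟩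

def oddToEvenMax (o : Multiset ℕ) : Multiset ℕ :=
  (o.sup + 1) ::ₘ thresholdMerge ((o.sup + 1) / 2) (o.erase o.sup)

def evenMaxToOdd (s : Multiset ℕ) : Multiset ℕ :=
  (s.sup - 1) ::ₘ oddSplit (s.erase s.sup)

theorem sup_cons_of_forall_le {M : ℕ} {r : Multiset ℕ} (h : ∀ x ∈ r, x ≤ M) :
    (M ::ₘ r).sup = M := by
  rw [Multiset.sup_cons]
  exact sup_eq_left.2 (Multiset.sup_le.2 h)

theorem oddToEvenMax_cons {j : ℕ} {r : Multiset ℕ} (hj : 0 < j) (hr : ∀ x ∈ r, x ≤ 2 * j - 1) :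
    oddToEvenMax ((2 * j - 1) ::ₘ r) = 2 * j ::ₘ thresholdMerge j r := by
  rw [oddToEvenMax, sup_cons_of_forall_le hr, Multiset.erase_cons_head,
    show 2 * j - 1 + 1 = 2 * j by omega, Nat.mul_div_cancel_left j two_pos]

theorem evenMaxToOdd_cons {N : ℕ} {r : Multiset ℕ} (hr : ∀ x ∈ r, x ≤ N) :
    evenMaxToOdd (N ::ₘ r) = (N - 1) ::ₘ oddSplit r := by
  rw [evenMaxToOdd, sup_cons_of_forall_le hr, Multiset.erase_cons_head]

theorem exists_eq_cons_of_mem_oddPartitions {n : ℕ} (hn : 0 < n) {o : Multiset ℕ}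
    (ho : o ∈ oddPartitions n) :
    ∃ j r, 0 < j ∧ o = (2 * j - 1) ::ₘ r ∧ ∀ x ∈ r, x ≤ 2 * j - 1 := by
  obtain ⟨hsum, hodd⟩ := ho
  have hne : o ≠ 0 := by rintro rfl; rw [Multiset.sum_zero] at hsum; omega
  obtain ⟨M, hM, hmax⟩ := Multiset.exists_max_image id hne
  obtain ⟨k, rfl⟩ := hodd M hM
  refine ⟨k + 1, o.erase (2 * k + 1), by omega, ?_, fun x hx => ?_⟩
  · rw [show 2 * (k + 1) - 1 = 2 * k + 1 by omega, Multiset.cons_erase hM]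
  · have : x ≤ 2 * k + 1 := hmax x (Multiset.mem_of_mem_erase hx)
    omega

theorem exists_eq_cons_of_mem_evenMaxPartitions {n : ℕ} {s : Multiset ℕ}
    (hs : s ∈ evenMaxPartitions n) :
    ∃ j r, 0 < j ∧ s = 2 * j ::ₘ r ∧ r.sum + 2 * j = n ∧ (∀ x ∈ r, 0 < x) ∧
      (∀ x ∈ r, x ≤ 2 * j) ∧ ∀ x ≤ j, r.count x ≤ 1 := by
  obtain ⟨hsum, hpos, j, hj, hmax, hdist⟩ := hs
  have hr := Multiset.cons_erase hj
  refine ⟨j, s.erase (2 * j), ?_, hr.symm, ?_, fun x hx => hpos x (Multiset.mem_of_mem_erase hx),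
    fun x hx => hmax x (Multiset.mem_of_mem_erase hx), fun x hx => ?_⟩
  · have := hpos _ hj; omega
  · have := congrArg Multiset.sum hr
    rw [Multiset.sum_cons] at this
    omega
  · by_cases hxs : x ∈ s
    · exact (Multiset.count_le_of_le x (Multiset.erase_le _ s)).trans (hdist x hxs hx)
    · rw [Multiset.count_eq_zero.2 fun h => hxs (Multiset.mem_of_mem_erase h)]
      exact zero_le_one

theorem mapsTo_oddToEvenMax {n : ℕ} (hn : 0 < n) :
    Set.MapsTo oddToEvenMax (oddPartitions n) (evenMaxPartitions (n + 1)) := by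
  intro o ho
  obtain ⟨j, r, hj, rfl, hr⟩ := exists_eq_cons_of_mem_oddPartitions hn ho
  obtain ⟨hsum, hodd⟩ := ho
  replace hodd : ∀ x ∈ r, Odd x := fun x hx => hodd x (Multiset.mem_cons_of_mem hx)
  have merged_mem : ∀ x ∈ thresholdMerge j r, x ∈ Icc 1 (2 * j) := fun x hx =>
    mem_Icc_of_mem_thresholdMerge hx
  rw [Multiset.sum_cons] at hsum
  rw [oddToEvenMax_cons hj hr]
  refine ⟨?_, ?_, j, Multiset.mem_cons_self _ _, ?_, fun b _ hb => ?_⟩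
  · rw [Multiset.sum_cons, sum_thresholdMerge hodd fun x hx => (hr x hx).trans (Nat.sub_le _ _)]
    omega
  · intro a ha
    rcases Multiset.mem_cons.1 ha with rfl | ha
    · omega
    · exact (mem_Icc.1 (merged_mem a ha)).1
  · intro b hb
    rcases Multiset.mem_cons.1 hb with rfl | hb
    · rfl
    · exact (mem_Icc.1 (merged_mem b hb)).2
  · rw [Multiset.count_cons_of_ne (by omega)]
    exact count_thresholdMerge_le_one r hb

theorem mapsTo_evenMaxToOdd (n : ℕ) :
    Set.MapsTo evenMaxToOdd (evenMaxPartitions (n + 1)) (oddPartitions n) := by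
  intro s hs
  obtain ⟨j, r, hj, rfl, hsum, hpos, hle, -⟩ := exists_eq_cons_of_mem_evenMaxPartitions hs
  rw [evenMaxToOdd_cons hle]
  refine ⟨?_, fun a ha => ?_⟩
  · rw [Multiset.sum_cons, sum_oddSplit]
    omega
  · rcases Multiset.mem_cons.1 ha with rfl | ha
    · exact ⟨j - 1, by omega⟩
    · exact odd_of_mem_oddSplit hpos ha

theorem bijOn_oddToEvenMax {n : ℕ} (hn : 0 < n) :
    Set.BijOn oddToEvenMax (oddPartitions n) (evenMaxPartitions (n + 1)) := by
  refine Set.InvOn.bijOn (f' := evenMaxToOdd) ⟨?_, ?_⟩ (mapsTo_oddToEvenMax hn)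
    (mapsTo_evenMaxToOdd n)
  · intro o ho
    obtain ⟨j, r, hj, rfl, hr⟩ := exists_eq_cons_of_mem_oddPartitions hn ho
    have hodd : ∀ x ∈ r, Odd x := fun x hx => ho.2 x (Multiset.mem_cons_of_mem hx)
    rw [oddToEvenMax_cons hj hr,
      evenMaxToOdd_cons fun x hx => (mem_Icc.1 (mem_Icc_of_mem_thresholdMerge hx)).2,
      oddSplit_thresholdMerge hodd fun x hx => (hr x hx).trans (Nat.sub_le _ _)]
  · intro s hs
    obtain ⟨j, r, hj, rfl, -, hpos, hle, hdist⟩ := exists_eq_cons_of_mem_evenMaxPartitions hs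
    have split_le : ∀ x ∈ oddSplit r, x ≤ 2 * j - 1 := fun x hx => by
      obtain ⟨k, rfl⟩ := odd_of_mem_oddSplit hpos hx
      have := le_of_mem_oddSplit hle hx
      omega
    rw [evenMaxToOdd_cons hle, oddToEvenMax_cons hj split_le,
      thresholdMerge_oddSplit hpos hle hdist]

end AKY

/-- Andrews–Kumar–Yee: for every positive integer `n`, the number of partitions of `n`
into distinct parts equals the number of partitions of `n+1` whose largest part is even
(say `2*j`) and in which all parts not exceeding `j` (half the largest part) are distinct. -/
theorem AKY_A_eq_C (n : ℕ) (hn : 0 < n) :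
    Nat.card {s : Multiset ℕ // s.sum = n ∧ (∀ a ∈ s, 0 < a) ∧ ∀ a, s.count a ≤ 1} =
    Nat.card {s : Multiset ℕ // s.sum = n + 1 ∧ (∀ a ∈ s, 0 < a) ∧
      ∃ j : ℕ, 2 * j ∈ s ∧ (∀ b ∈ s, b ≤ 2 * j) ∧ ∀ b ∈ s, b ≤ j → s.count b ≤ 1} := by
  change (AKY.distinctPartitions n).ncard = (AKY.evenMaxPartitions (n + 1)).ncard
  rw [← (AKY.bijOn_thresholdMerge n).ncard_eq, (AKY.bijOn_oddToEvenMax hn).ncard_eq]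
end

section
/- For every positive integer n, twice the number of partitions of n into distinct parts equals the number of partitions of n+1 into nonnegative parts in which the smallest part occurs exactly twice and no other part is repeated. -/
open Multiset

/-- The minimum element of a multiset of naturals (junk value `0` on the empty multiset). -/
private noncomputable def AKYmn (μ : Multiset ℕ) : ℕ := sInf {a | a ∈ μ}

private lemma AKYmn_mem {μ : Multiset ℕ} (h : μ ≠ 0) : AKYmn μ ∈ μ := by
  have hne : {a | a ∈ μ}.Nonempty := by
    obtain ⟨a, ha⟩ := Multiset.exists_mem_of_ne_zero h
    exact ⟨a, ha⟩
  exact Nat.sInf_mem hne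

private lemma AKYmn_le {μ : Multiset ℕ} {b : ℕ} (h : b ∈ μ) : AKYmn μ ≤ b :=
  Nat.sInf_le h

/-- the predicate for distinct partitions of `n` -/
private def PX (n : ℕ) (s : Multiset ℕ) : Prop :=
  s.sum = n ∧ (∀ a ∈ s, 0 < a) ∧ ∀ a, s.count a ≤ 1

/-- the predicate for partitions of `n+1` with smallest part repeated exactly twice -/
private def QY (n : ℕ) (s : Multiset ℕ) : Prop :=
  s.sum = n + 1 ∧
    ∃ a ∈ s, s.count a = 2 ∧ (∀ b ∈ s, a ≤ b) ∧ ∀ b ∈ s, b ≠ a → s.count b = 1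

/-- the core of the bijection `Bool × A(n) → D(n+1)` -/
private noncomputable def AKYcore (t : Bool) (μ : Multiset ℕ) : Multiset ℕ :=
  if t then (if 1 ∈ μ then 1 ::ₘ μ else 0 ::ₘ 0 ::ₘ 1 ::ₘ μ)
  else (if AKYmn μ + 1 ∈ μ then (AKYmn μ + 1) ::ₘ μ.erase (AKYmn μ)
        else 0 ::ₘ 0 ::ₘ (AKYmn μ + 1) ::ₘ μ.erase (AKYmn μ))

private lemma AKY_basic {n : ℕ} (hn : 0 < n) {μ : Multiset ℕ} (h : PX n μ) :
    μ ≠ 0 ∧ AKYmn μ ∈ μ ∧ 1 ≤ AKYmn μ ∧ AKYmn μ ∉ μ.erase (AKYmn μ) ∧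
      (∀ b ∈ μ.erase (AKYmn μ), AKYmn μ + 1 ≤ b) ∧
      AKYmn μ + (μ.erase (AKYmn μ)).sum = n := by
  obtain ⟨hsum, hpos, hcnt⟩ := h
  have hne : μ ≠ 0 := by
    intro h0; rw [h0] at hsum; simp at hsum; omega
  have hm : AKYmn μ ∈ μ := AKYmn_mem hne
  have h1m : 1 ≤ AKYmn μ := hpos _ hm
  have hnm : AKYmn μ ∉ μ.erase (AKYmn μ) := by
    rw [← Multiset.count_pos, Multiset.count_erase_self]
    have := hcnt (AKYmn μ); omega
  have hge : ∀ b ∈ μ.erase (AKYmn μ), AKYmn μ + 1 ≤ b := by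
    intro b hb
    have hbμ : b ∈ μ := Multiset.mem_of_mem_erase hb
    have : AKYmn μ ≤ b := AKYmn_le hbμ
    rcases eq_or_lt_of_le this with heq | hlt
    · exact absurd (heq ▸ hb) hnm
    · omega
  refine ⟨hne, hm, h1m, hnm, hge, ?_⟩
  have := Multiset.cons_erase hm
  calc AKYmn μ + (μ.erase (AKYmn μ)).sum = (AKYmn μ ::ₘ μ.erase (AKYmn μ)).sum := by
        rw [Multiset.sum_cons]
    _ = n := by rw [this, hsum]

private lemma count_one_of_mem {μ : Multiset ℕ} (hcnt : ∀ a, μ.count a ≤ 1) {b : ℕ}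
    (hb : b ∈ μ) : μ.count b = 1 := by
  have := hcnt b
  have := Multiset.count_pos.mpr hb
  omega

private lemma AKY_maps {n : ℕ} (hn : 0 < n) (t : Bool) {μ : Multiset ℕ}
    (h : PX n μ) : QY n (AKYcore t μ) := by
  obtain ⟨hne, hm, h1m, hnm, hge, hesum⟩ := AKY_basic hn h
  obtain ⟨hsum, hpos, hcnt⟩ := h
  have h0μ : 0 ∉ μ := fun h0 => absurd (hpos 0 h0) (lt_irrefl 0)
  cases t with
  | true =>
    by_cases h1 : 1 ∈ μ
    · have hc : AKYcore true μ = 1 ::ₘ μ := by simp [AKYcore, h1]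
      rw [hc]
      refine ⟨by simp [hsum, add_comm], 1, Multiset.mem_cons_self 1 _, ?_, ?_, ?_⟩
      · rw [Multiset.count_cons_self, count_one_of_mem hcnt h1]
      · intro b hb
        rcases Multiset.mem_cons.mp hb with hb | hb
        · omega
        · exact hpos b hb
      · intro b hb hb1
        rcases Multiset.mem_cons.mp hb with hb | hb
        · exact absurd hb hb1
        · rw [Multiset.count_cons_of_ne hb1, count_one_of_mem hcnt hb]
    · have hc : AKYcore true μ = 0 ::ₘ 0 ::ₘ 1 ::ₘ μ := by simp [AKYcore, h1]
      rw [hc]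
      refine ⟨by simp [hsum]; omega, 0, Multiset.mem_cons_self 0 _, ?_, ?_, ?_⟩
      · rw [Multiset.count_cons_self, Multiset.count_cons_self,
          Multiset.count_cons_of_ne (by omega : (0:ℕ) ≠ 1),
          Multiset.count_eq_zero.mpr h0μ]
      · intro b _; omega
      · intro b hb hb0
        rw [Multiset.count_cons_of_ne hb0, Multiset.count_cons_of_ne hb0]
        rcases Multiset.mem_cons.mp hb with hb | hb
        · exact absurd hb hb0
        rcases Multiset.mem_cons.mp hb with hb | hb
        · exact absurd hb hb0
        rcases Multiset.mem_cons.mp hb with hb | hb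
        · rw [hb, Multiset.count_cons_self, Multiset.count_eq_zero.mpr h1]
        · rw [Multiset.count_cons_of_ne (fun hh => h1 (by rwa [hh] at hb)),
            count_one_of_mem hcnt hb]
  | false =>
    set m := AKYmn μ with hmdef
    have h0e : 0 ∉ μ.erase m := fun h0 => h0μ (Multiset.mem_of_mem_erase h0)
    have hcnte : ∀ a, (μ.erase m).count a ≤ 1 := fun a => by
      have h1 := hcnt a
      have h2 : (μ.erase m).count a ≤ μ.count a :=
        Multiset.count_le_of_le a (Multiset.erase_le m μ)
      omega
    by_cases h2 : m + 1 ∈ μ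
    · have h2e : m + 1 ∈ μ.erase m :=
        (Multiset.mem_erase_of_ne (by omega)).mpr h2
      have hc : AKYcore false μ = (m + 1) ::ₘ μ.erase m := by
        simp [AKYcore, ← hmdef, h2]
      rw [hc]
      refine ⟨?_, m + 1, Multiset.mem_cons_self _ _, ?_, ?_, ?_⟩
      · rw [Multiset.sum_cons]; omega
      · rw [Multiset.count_cons_self, count_one_of_mem hcnte h2e]
      · intro b hb
        rcases Multiset.mem_cons.mp hb with hb | hb
        · omega
        · exact hge b hb
      · intro b hb hbne
        rcases Multiset.mem_cons.mp hb with hb | hb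
        · exact absurd hb hbne
        · rw [Multiset.count_cons_of_ne hbne,
            Multiset.count_erase_of_ne (fun hh => hnm (by rwa [hh] at hb)),
            count_one_of_mem hcnt (Multiset.mem_of_mem_erase hb)]
    · have hc : AKYcore false μ = 0 ::ₘ 0 ::ₘ (m + 1) ::ₘ μ.erase m := by
        simp [AKYcore, ← hmdef, h2]
      rw [hc]
      refine ⟨?_, 0, Multiset.mem_cons_self _ _, ?_, ?_, ?_⟩
      · simp only [Multiset.sum_cons]; omega
      · rw [Multiset.count_cons_self, Multiset.count_cons_self,
          Multiset.count_cons_of_ne (by omega : (0:ℕ) ≠ m + 1),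
          Multiset.count_eq_zero.mpr h0e]
      · intro b _; omega
      · intro b hb hb0
        rw [Multiset.count_cons_of_ne hb0, Multiset.count_cons_of_ne hb0]
        rcases Multiset.mem_cons.mp hb with hb | hb
        · exact absurd hb hb0
        rcases Multiset.mem_cons.mp hb with hb | hb
        · exact absurd hb hb0
        rcases Multiset.mem_cons.mp hb with hb | hb
        · rw [hb, Multiset.count_cons_self, Multiset.count_eq_zero.mpr
            (fun hh => h2 (Multiset.mem_of_mem_erase hh))]
        · rw [Multiset.count_cons_of_ne
              (fun hh => h2 (by rw [← hh]; exact Multiset.mem_of_mem_erase hb)),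
            Multiset.count_erase_of_ne (fun hh => hnm (by rwa [hh] at hb)),
            count_one_of_mem hcnt (Multiset.mem_of_mem_erase hb)]

private lemma AKY_mem_one {n : ℕ} (hn : 0 < n) (t : Bool) {μ : Multiset ℕ}
    (h : PX n μ) : 1 ∈ AKYcore t μ ↔ t = true := by
  obtain ⟨hne, hm, h1m, hnm, hge, hesum⟩ := AKY_basic hn h
  cases t with
  | true =>
    simp only [iff_true]
    by_cases h1 : 1 ∈ μ <;> simp [AKYcore, h1]
  | false =>
    simp only [Bool.false_eq_true, iff_false]
    intro hmem
    by_cases h2 : AKYmn μ + 1 ∈ μ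
    · rw [show AKYcore false μ = (AKYmn μ + 1) ::ₘ μ.erase (AKYmn μ) from by
        simp [AKYcore, h2]] at hmem
      rcases Multiset.mem_cons.mp hmem with hh | hh
      · omega
      · have := hge _ hh; omega
    · rw [show AKYcore false μ = 0 ::ₘ 0 ::ₘ (AKYmn μ + 1) ::ₘ μ.erase (AKYmn μ) from by
        simp [AKYcore, h2]] at hmem
      rcases Multiset.mem_cons.mp hmem with hh | hmem
      · omega
      rcases Multiset.mem_cons.mp hmem with hh | hmem
      · omega
      rcases Multiset.mem_cons.mp hmem with hh | hmem
      · omega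
      · have := hge _ hmem; omega

private lemma AKY_inj {n : ℕ} (hn : 0 < n) {t t' : Bool} {μ μ' : Multiset ℕ}
    (h : PX n μ) (h' : PX n μ') (he : AKYcore t μ = AKYcore t' μ') :
    t = t' ∧ μ = μ' := by
  obtain ⟨hne, hm, h1m, hnm, hge, hesum⟩ := AKY_basic hn h
  obtain ⟨hne', hm', h1m', hnm', hge', hesum'⟩ := AKY_basic hn h'
  have h0μ : (0:ℕ) ∉ μ := fun h0 => absurd (h.2.1 0 h0) (lt_irrefl 0)
  have h0μ' : (0:ℕ) ∉ μ' := fun h0 => absurd (h'.2.1 0 h0) (lt_irrefl 0)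
  have ht : t = t' := by
    have e1 := AKY_mem_one hn t h
    have e2 := AKY_mem_one hn t' h'
    rw [he, e2] at e1
    cases t <;> cases t' <;> simp_all
  subst ht
  refine ⟨rfl, ?_⟩
  cases t with
  | true =>
    by_cases h1 : 1 ∈ μ <;> by_cases h1' : 1 ∈ μ'
    · rw [show AKYcore true μ = 1 ::ₘ μ from by simp [AKYcore, h1],
          show AKYcore true μ' = 1 ::ₘ μ' from by simp [AKYcore, h1']] at he
      exact (Multiset.cons_inj_right 1).mp he
    · exfalso
      rw [show AKYcore true μ = 1 ::ₘ μ from by simp [AKYcore, h1],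
          show AKYcore true μ' = 0 ::ₘ 0 ::ₘ 1 ::ₘ μ' from by simp [AKYcore, h1']] at he
      have h0 : (0:ℕ) ∈ 1 ::ₘ μ := by rw [he]; exact Multiset.mem_cons_self 0 _
      rcases Multiset.mem_cons.mp h0 with hh | hh
      · omega
      · exact h0μ hh
    · exfalso
      rw [show AKYcore true μ = 0 ::ₘ 0 ::ₘ 1 ::ₘ μ from by simp [AKYcore, h1],
          show AKYcore true μ' = 1 ::ₘ μ' from by simp [AKYcore, h1']] at he
      have h0 : (0:ℕ) ∈ 1 ::ₘ μ' := by rw [← he]; exact Multiset.mem_cons_self 0 _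
      rcases Multiset.mem_cons.mp h0 with hh | hh
      · omega
      · exact h0μ' hh
    · rw [show AKYcore true μ = 0 ::ₘ 0 ::ₘ 1 ::ₘ μ from by simp [AKYcore, h1],
          show AKYcore true μ' = 0 ::ₘ 0 ::ₘ 1 ::ₘ μ' from by simp [AKYcore, h1']] at he
      have he1 := (Multiset.cons_inj_right _).mp he
      have he2 := (Multiset.cons_inj_right _).mp he1
      exact (Multiset.cons_inj_right _).mp he2
  | false =>
    have main : (AKYmn μ + 1) ::ₘ μ.erase (AKYmn μ) =
        (AKYmn μ' + 1) ::ₘ μ'.erase (AKYmn μ') → μ = μ' := by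
      intro he
      have l1 : AKYmn μ' + 1 ≤ AKYmn μ + 1 := by
        have hmem : AKYmn μ + 1 ∈ (AKYmn μ' + 1) ::ₘ μ'.erase (AKYmn μ') := by
          rw [← he]; exact Multiset.mem_cons_self _ _
        rcases Multiset.mem_cons.mp hmem with hh | hh
        · omega
        · have := hge' _ hh; omega
      have l2 : AKYmn μ + 1 ≤ AKYmn μ' + 1 := by
        have hmem : AKYmn μ' + 1 ∈ (AKYmn μ + 1) ::ₘ μ.erase (AKYmn μ) := by
          rw [he]; exact Multiset.mem_cons_self _ _
        rcases Multiset.mem_cons.mp hmem with hh | hh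
        · omega
        · have := hge _ hh; omega
      have hmm : AKYmn μ = AKYmn μ' := by omega
      rw [hmm] at he
      have he2 := (Multiset.cons_inj_right _).mp he
      calc μ = AKYmn μ ::ₘ μ.erase (AKYmn μ) := (Multiset.cons_erase hm).symm
        _ = AKYmn μ' ::ₘ μ'.erase (AKYmn μ') := by rw [hmm, he2]
        _ = μ' := Multiset.cons_erase hm'
    by_cases h2 : AKYmn μ + 1 ∈ μ <;> by_cases h2' : AKYmn μ' + 1 ∈ μ'
    · rw [show AKYcore false μ = (AKYmn μ + 1) ::ₘ μ.erase (AKYmn μ) from by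
            simp [AKYcore, h2],
          show AKYcore false μ' = (AKYmn μ' + 1) ::ₘ μ'.erase (AKYmn μ') from by
            simp [AKYcore, h2']] at he
      exact main he
    · exfalso
      rw [show AKYcore false μ = (AKYmn μ + 1) ::ₘ μ.erase (AKYmn μ) from by
            simp [AKYcore, h2],
          show AKYcore false μ' = 0 ::ₘ 0 ::ₘ (AKYmn μ' + 1) ::ₘ μ'.erase (AKYmn μ') from by
            simp [AKYcore, h2']] at he
      have h0 : (0:ℕ) ∈ (AKYmn μ + 1) ::ₘ μ.erase (AKYmn μ) := by
        rw [he]; exact Multiset.mem_cons_self 0 _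
      rcases Multiset.mem_cons.mp h0 with hh | hh
      · omega
      · have := hge _ hh; omega
    · exfalso
      rw [show AKYcore false μ = 0 ::ₘ 0 ::ₘ (AKYmn μ + 1) ::ₘ μ.erase (AKYmn μ) from by
            simp [AKYcore, h2],
          show AKYcore false μ' = (AKYmn μ' + 1) ::ₘ μ'.erase (AKYmn μ') from by
            simp [AKYcore, h2']] at he
      have h0 : (0:ℕ) ∈ (AKYmn μ' + 1) ::ₘ μ'.erase (AKYmn μ') := by
        rw [← he]; exact Multiset.mem_cons_self 0 _
      rcases Multiset.mem_cons.mp h0 with hh | hh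
      · omega
      · have := hge' _ hh; omega
    · rw [show AKYcore false μ = 0 ::ₘ 0 ::ₘ (AKYmn μ + 1) ::ₘ μ.erase (AKYmn μ) from by
            simp [AKYcore, h2],
          show AKYcore false μ' = 0 ::ₘ 0 ::ₘ (AKYmn μ' + 1) ::ₘ μ'.erase (AKYmn μ') from by
            simp [AKYcore, h2']] at he
      have he1 := (Multiset.cons_inj_right _).mp he
      exact main ((Multiset.cons_inj_right _).mp he1)

private lemma AKY_surj {n : ℕ} (hn : 0 < n) {s : Multiset ℕ} (h : QY n s) :
    ∃ t μ, PX n μ ∧ AKYcore t μ = s := by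
  obtain ⟨hsum, a, has, hca, hmin, hoth⟩ := h
  by_cases ha1 : a = 1
  · -- a = 1 : take μ = s.erase 1
    subst ha1
    have h1μ : (1:ℕ) ∈ s.erase 1 := by
      rw [← Multiset.count_pos, Multiset.count_erase_self, hca]
      omega
    have hsume : (1:ℕ) + (s.erase 1).sum = s.sum := by
      rw [← Multiset.sum_cons, Multiset.cons_erase has]
    refine ⟨true, s.erase 1, ⟨?_, ?_, ?_⟩, ?_⟩
    · omega
    · intro b hb
      have := hmin b (Multiset.mem_of_mem_erase hb); omega
    · intro b
      rcases eq_or_ne b 1 with hb | hb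
      · rw [hb, Multiset.count_erase_self, hca]
      · rw [Multiset.count_erase_of_ne hb]
        by_cases hbs : b ∈ s
        · rw [hoth b hbs hb]
        · rw [Multiset.count_eq_zero.mpr hbs]; omega
    · rw [show AKYcore true (s.erase 1) = 1 ::ₘ s.erase 1 from by simp [AKYcore, h1μ]]
      exact Multiset.cons_erase has
  by_cases ha0 : a = 0
  · -- a = 0
    subst ha0
    have h0e : (0:ℕ) ∈ s.erase 0 := by
      rw [← Multiset.count_pos, Multiset.count_erase_self, hca]
      omega
    set B := (s.erase 0).erase 0 with hBdef
    have hsB : s = 0 ::ₘ 0 ::ₘ B := by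
      rw [hBdef, Multiset.cons_erase h0e, Multiset.cons_erase has]
    have hcntB : ∀ b : ℕ, b ≠ 0 → B.count b = s.count b := fun b hb => by
      rw [hBdef, Multiset.count_erase_of_ne hb, Multiset.count_erase_of_ne hb]
    have h0B : (0:ℕ) ∉ B := by
      rw [← Multiset.count_eq_zero, hBdef, Multiset.count_erase_self,
        Multiset.count_erase_self, hca]
    have hBsum : B.sum = n + 1 := by
      have h2 := hsum
      rw [hsB, Multiset.sum_cons, Multiset.sum_cons] at h2
      omega
    have hBmem : ∀ b ∈ B, b ∈ s := fun b hb => by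
      rw [hsB]; exact Multiset.mem_cons_of_mem (Multiset.mem_cons_of_mem hb)
    have hcntB1 : ∀ b ∈ B, B.count b = 1 := fun b hb => by
      have hb0 : b ≠ 0 := fun hh => h0B (hh ▸ hb)
      rw [hcntB b hb0]; exact hoth b (hBmem b hb) hb0
    by_cases h1 : (1:ℕ) ∈ s
    · -- take μ = B.erase 1
      have h1B : (1:ℕ) ∈ B := by
        rw [← Multiset.count_pos, hcntB 1 one_ne_zero, hoth 1 h1 one_ne_zero]; omega
      have hsume : (1:ℕ) + (B.erase 1).sum = B.sum := by
        rw [← Multiset.sum_cons, Multiset.cons_erase h1B]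
      have h1ne : (1:ℕ) ∉ B.erase 1 := by
        rw [← Multiset.count_eq_zero, Multiset.count_erase_self, hcntB1 1 h1B]
      refine ⟨true, B.erase 1, ⟨?_, ?_, ?_⟩, ?_⟩
      · omega
      · intro b hb
        have hbB : b ∈ B := Multiset.mem_of_mem_erase hb
        have : b ≠ 0 := fun hh => h0B (hh ▸ hbB)
        omega
      · intro b
        rcases eq_or_ne b 1 with hb | hb
        · rw [hb, Multiset.count_erase_self, hcntB1 1 h1B]; omega
        · rw [Multiset.count_erase_of_ne hb]
          by_cases hbB : b ∈ B
          · rw [hcntB1 b hbB]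
          · rw [Multiset.count_eq_zero.mpr hbB]; omega
      · rw [show AKYcore true (B.erase 1) = 0 ::ₘ 0 ::ₘ 1 ::ₘ B.erase 1 from by
          simp [AKYcore, h1ne]]
        rw [Multiset.cons_erase h1B]
        exact hsB.symm
    · -- 1 ∉ s : take μ = (b1 - 1) ::ₘ B.erase b1
      have hBne : B ≠ 0 := by
        intro h0; rw [h0] at hBsum; simp at hBsum
      have hb1B : AKYmn B ∈ B := AKYmn_mem hBne
      set b1 := AKYmn B with hb1def
      have hb1s : b1 ∈ s := hBmem _ hb1B
      have hb1ne0 : b1 ≠ 0 := fun hh => h0B (hh ▸ hb1B)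
      have hb1ne1 : b1 ≠ 1 := fun hh => h1 (hh ▸ hb1s)
      have hb12 : 2 ≤ b1 := by omega
      have hb1meme : b1 ∉ B.erase b1 := by
        rw [← Multiset.count_pos, Multiset.count_erase_self, hcntB1 b1 hb1B]
        omega
      have hememB : ∀ c ∈ B.erase b1, c ∈ B ∧ b1 + 1 ≤ c := by
        intro c hc
        have hcB := Multiset.mem_of_mem_erase hc
        have hle : b1 ≤ c := AKYmn_le hcB
        have hne : c ≠ b1 := fun hh => hb1meme (hh ▸ hc)
        exact ⟨hcB, by omega⟩
      set μ := (b1 - 1) ::ₘ B.erase b1 with hμdef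
      have hμne : μ ≠ 0 := by simp [hμdef]
      have hmnμ : AKYmn μ = b1 - 1 := by
        apply le_antisymm
        · exact AKYmn_le (Multiset.mem_cons_self _ _)
        · have hmem := AKYmn_mem hμne
          rcases Multiset.mem_cons.mp hmem with hh | hh
          · omega
          · have := (hememB _ hh).2; omega
      have hcond : AKYmn μ + 1 ∉ μ := by
        rw [hmnμ, show b1 - 1 + 1 = b1 from by omega]
        intro hmem
        rcases Multiset.mem_cons.mp hmem with hh | hh
        · omega
        · exact hb1meme hh
      have hsumB' : b1 + (B.erase b1).sum = n + 1 := by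
        rw [← Multiset.sum_cons, Multiset.cons_erase hb1B, hBsum]
      refine ⟨false, μ, ⟨?_, ?_, ?_⟩, ?_⟩
      · rw [hμdef, Multiset.sum_cons]; omega
      · intro c hc
        rcases Multiset.mem_cons.mp hc with hh | hh
        · omega
        · have := (hememB _ hh).2; omega
      · intro c
        rcases eq_or_ne c (b1 - 1) with hc | hc
        · rw [hc, hμdef, Multiset.count_cons_self,
            Multiset.count_eq_zero.mpr (fun hh => by have := (hememB _ hh).2; omega)]
        · rw [hμdef, Multiset.count_cons_of_ne hc]
          by_cases hcB : c ∈ B.erase b1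
          · have h1' := hcntB1 c (hememB _ hcB).1
            have h2' : (B.erase b1).count c ≤ B.count c :=
              Multiset.count_le_of_le c (Multiset.erase_le b1 B)
            omega
          · rw [Multiset.count_eq_zero.mpr hcB]; omega
      · rw [show AKYcore false μ = 0 ::ₘ 0 ::ₘ (AKYmn μ + 1) ::ₘ μ.erase (AKYmn μ) from by
          simp [AKYcore, hcond]]
        rw [hmnμ, show b1 - 1 + 1 = b1 from by omega, hμdef,
          Multiset.erase_cons_head, Multiset.cons_erase hb1B]
        exact hsB.symm
  · -- a ≥ 2 : take μ = (a - 1) ::ₘ s.erase a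
    have ha2 : 2 ≤ a := by
      rcases Nat.lt_or_ge a 2 with hlt | hge2
      · interval_cases a <;> simp_all
      · exact hge2
    have hae : a ∈ s.erase a := by
      rw [← Multiset.count_pos, Multiset.count_erase_self, hca]; omega
    have hene : ∀ c ∈ s.erase a, a ≤ c := fun c hc => hmin c (Multiset.mem_of_mem_erase hc)
    have hk1 : (a - 1) ∉ s.erase a := fun hh => by have := hene _ hh; omega
    set μ := (a - 1) ::ₘ s.erase a with hμdef
    have hμne : μ ≠ 0 := by simp [hμdef]
    have hmnμ : AKYmn μ = a - 1 := by
      apply le_antisymm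
      · exact AKYmn_le (Multiset.mem_cons_self _ _)
      · have hmem := AKYmn_mem hμne
        rcases Multiset.mem_cons.mp hmem with hh | hh
        · omega
        · have := hene _ hh; omega
    have hcond : AKYmn μ + 1 ∈ μ := by
      rw [hmnμ, show a - 1 + 1 = a from by omega]
      exact Multiset.mem_cons_of_mem hae
    have hsume : a + (s.erase a).sum = n + 1 := by
      rw [← Multiset.sum_cons, Multiset.cons_erase has, hsum]
    refine ⟨false, μ, ⟨?_, ?_, ?_⟩, ?_⟩
    · rw [hμdef, Multiset.sum_cons]; omega
    · intro c hc
      rcases Multiset.mem_cons.mp hc with hh | hh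
      · omega
      · have := hene _ hh; omega
    · intro c
      rcases eq_or_ne c (a - 1) with hc | hc
      · rw [hc, hμdef, Multiset.count_cons_self, Multiset.count_eq_zero.mpr hk1]
      · rw [hμdef, Multiset.count_cons_of_ne hc]
        rcases eq_or_ne c a with hc2 | hc2
        · rw [hc2, Multiset.count_erase_self, hca]
        · rw [Multiset.count_erase_of_ne hc2]
          by_cases hcs : c ∈ s
          · rw [hoth c hcs hc2]
          · rw [Multiset.count_eq_zero.mpr hcs]; omega
    · rw [show AKYcore false μ = (AKYmn μ + 1) ::ₘ μ.erase (AKYmn μ) from by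
        simp [AKYcore, hcond]]
      rw [hmnμ, show a - 1 + 1 = a from by omega, hμdef,
        Multiset.erase_cons_head, Multiset.cons_erase has]

/-- Andrews–Kumar–Yee: for every positive integer `n`, twice the number of partitions of
`n` into distinct parts equals the number of partitions of `n+1` into nonnegative parts
(so `0` is allowed as a part) in which the smallest part occurs exactly twice and every
other part occurs exactly once. -/
theorem AKY_two_A_eq_D (n : ℕ) (hn : 0 < n) :
    2 * Nat.card {s : Multiset ℕ // s.sum = n ∧ (∀ a ∈ s, 0 < a) ∧ ∀ a, s.count a ≤ 1} =
    Nat.card {s : Multiset ℕ // s.sum = n + 1 ∧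
      ∃ a ∈ s, s.count a = 2 ∧ (∀ b ∈ s, a ≤ b) ∧ ∀ b ∈ s, b ≠ a → s.count b = 1} := by
  have hX : {s : Multiset ℕ // s.sum = n ∧ (∀ a ∈ s, 0 < a) ∧ ∀ a, s.count a ≤ 1} =
      {s : Multiset ℕ // PX n s} := rfl
  have hY : {s : Multiset ℕ // s.sum = n + 1 ∧
      ∃ a ∈ s, s.count a = 2 ∧ (∀ b ∈ s, a ≤ b) ∧ ∀ b ∈ s, b ≠ a → s.count b = 1} =
      {s : Multiset ℕ // QY n s} := rfl
  rw [hX, hY]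
  have hbij : Function.Bijective (fun p : Bool × {s : Multiset ℕ // PX n s} =>
      (⟨AKYcore p.1 p.2.1, AKY_maps hn p.1 p.2.2⟩ : {s : Multiset ℕ // QY n s})) := by
    constructor
    · rintro ⟨t, μ, hμ⟩ ⟨t', μ', hμ'⟩ hpq
      obtain ⟨ht, hμμ⟩ := AKY_inj hn hμ hμ' (congrArg Subtype.val hpq)
      simp only [Prod.mk.injEq, Subtype.mk.injEq]
      exact ⟨ht, hμμ⟩
    · rintro ⟨s, hs⟩
      obtain ⟨t, μ, hP, heq⟩ := AKY_surj hn hs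
      exact ⟨⟨t, μ, hP⟩, Subtype.ext heq⟩
  calc 2 * Nat.card {s : Multiset ℕ // PX n s}
      = Nat.card (Bool × {s : Multiset ℕ // PX n s}) := by
        have hb2 : Nat.card Bool = 2 := by simp [Nat.card_eq_fintype_card]
        rw [Nat.card_prod, hb2]
    _ = Nat.card {s : Multiset ℕ // QY n s} := Nat.card_eq_of_bijective _ hbij
end

section
/- For every integer m ≥ 2 and positive integer n, the number of partitions of n into parts not divisible by m whose largest part is congruent to m−1 modulo m equals the number of partitions of n+1 in which the largest part is divisible by m, say equal to m·j, and all parts less than or equal to j occur fewer than m times. -/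
/-!
The proof is a bijection of Glaisher type. If `L` is the largest part of a partition counted by
`B_m^{(m-1)}(n)`, then `L + 1 = m j`. Replace `L` by `m j`, and for every other part `a` (not
divisible by `m`), occurring `c` times, write `c` in base `m` along the chain `a, m a, m² a, …`:
the digits become the multiplicities of the parts `mⁱ a ≤ j`, and the remaining high part of `c`
goes to the first part of the chain exceeding `j`, which is at most `m j`. Conversely, remove
one copy of the largest part `m j`, split every other part `mⁱ a` into `mⁱ` copies of `a`, and
add the part `m j - 1`.
-/

lemma Multiset.sup_eq_of_mem {α : Type*} [SemilatticeSup α] [OrderBot α] {s : Multiset α} {L : α}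
    (hL : L ∈ s) (hle : ∀ b ∈ s, b ≤ L) : s.sup = L :=
  le_antisymm (Multiset.sup_le.2 hle) (Multiset.le_sup hL)

lemma Multiset.sum_filter_fibers {α ι : Type*} [DecidableEq α] [DecidableEq ι] {t : Multiset α}
    {f : α → ι} {F : Finset ι} (ht : ∀ b ∈ t, f b ∈ F) : ∑ a ∈ F, t.filter (f · = a) = t := by
  ext x
  rw [Multiset.count_sum']
  simp_rw [Multiset.count_filter]
  rw [Finset.sum_ite_eq]
  split_ifs with hx
  · rfl
  · exact (Multiset.count_eq_zero.2 fun hxt => hx (ht x hxt)).symm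

lemma Nat.pos_of_not_dvd {m a : ℕ} (h : ¬ m ∣ a) : 0 < a :=
  Nat.pos_of_ne_zero (by rintro rfl; exact h (dvd_zero m))

lemma Nat.mul_div_add_one_of_mod_eq {m L : ℕ} (hm : 0 < m) (hL : L % m = m - 1) :
    m * ((L + 1) / m) = L + 1 := by
  refine Nat.mul_div_cancel' ⟨L / m + 1, ?_⟩
  have := Nat.div_add_mod L m
  rw [mul_add, mul_one]
  omega

lemma Nat.mul_sub_one_mod {m j : ℕ} (hm : 0 < m) (hj : 0 < j) : (m * j - 1) % m = m - 1 := by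
  obtain ⟨k, rfl⟩ : ∃ k, j = k + 1 := ⟨j - 1, by omega⟩
  rw [show m * (k + 1) - 1 = m - 1 + m * k by rw [mul_add, mul_one]; omega,
    Nat.add_mul_mod_self_left, Nat.mod_eq_of_lt (by omega)]

lemma Nat.divMaxPow_of_not_dvd {m a : ℕ} (ha : ¬ m ∣ a) : a.divMaxPow m = a := by
  rw [Nat.divMaxPow, Nat.maxPowDvdDiv_of_not_dvd ha]

lemma Nat.divMaxPow_pow_mul {m a : ℕ} (hm : m ≠ 0) (ha : ¬ m ∣ a) (i : ℕ) :
    (m ^ i * a).divMaxPow m = a := by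
  rw [Nat.divMaxPow_base_pow_mul hm, Nat.divMaxPow_of_not_dvd ha]

lemma Nat.divMaxPow_le_self (m b : ℕ) : b.divMaxPow m ≤ b := by
  rcases b.eq_zero_or_pos with rfl | hb
  · simp
  · exact Nat.le_of_dvd hb (Dvd.intro_left _ (Nat.pow_padicValNat_mul_divMaxPow m b))

namespace LinZhang

open Multiset

def split (m : ℕ) (t : Multiset ℕ) : Multiset ℕ :=
  t.bind fun b => replicate (m ^ padicValNat m b) (b.divMaxPow m)

section split

variable {m : ℕ}

@[simp] lemma split_zero : split m 0 = 0 := zero_bind _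

@[simp] lemma split_add (t u : Multiset ℕ) : split m (t + u) = split m t + split m u :=
  add_bind _ _ _

@[simp] lemma split_cons (b : ℕ) (t : Multiset ℕ) :
    split m (b ::ₘ t) = replicate (m ^ padicValNat m b) (b.divMaxPow m) + split m t :=
  cons_bind _ _ _

lemma split_sum {ι : Type*} (F : Finset ι) (f : ι → Multiset ℕ) :
    split m (∑ i ∈ F, f i) = ∑ i ∈ F, split m (f i) :=
  map_sum ({ toFun := split m, map_zero' := split_zero, map_add' := split_add } :
    Multiset ℕ →+ Multiset ℕ) f F

lemma split_replicate (k b : ℕ) :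
    split m (replicate k b) = replicate (k * m ^ padicValNat m b) (b.divMaxPow m) := by
  induction k with
  | zero => simp
  | succ k ih => rw [replicate_succ, split_cons, ih, ← replicate_add]; ring_nf

lemma split_replicate_of_not_dvd {a : ℕ} (ha : ¬ m ∣ a) (k : ℕ) :
    split m (replicate k a) = replicate k a := by
  simp [split_replicate, padicValNat.eq_zero_of_not_dvd ha, Nat.divMaxPow_of_not_dvd ha]

lemma split_replicate_base_mul (hm : 1 < m) {b : ℕ} (hb : b ≠ 0) (k : ℕ) :
    split m (replicate k (m * b)) = split m (replicate (m * k) b) := by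
  rw [split_replicate, split_replicate, padicValNat_base_mul hm hb,
    Nat.divMaxPow_base_mul (by omega), pow_succ]
  ring_nf

@[simp] lemma sum_split (t : Multiset ℕ) : (split m t).sum = t.sum := by
  induction t using Multiset.induction with
  | empty => simp
  | cons b t ih => simp [ih, Nat.pow_padicValNat_mul_divMaxPow]

lemma exists_of_mem_split {t : Multiset ℕ} {a : ℕ} (ha : a ∈ split m t) :
    ∃ b ∈ t, b.divMaxPow m = a := by
  obtain ⟨b, hb, hab⟩ := mem_bind.1 ha
  exact ⟨b, hb, (eq_of_mem_replicate hab).symm⟩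

lemma count_split_mul (t : Multiset ℕ) (a : ℕ) :
    (split m t).count a * a = (t.filter (·.divMaxPow m = a)).sum := by
  induction t using Multiset.induction with
  | empty => simp
  | cons b t ih =>
    rw [split_cons, count_add, add_mul, ih, filter_cons, sum_add, count_replicate]
    split_ifs with h
    · simp [← h, Nat.pow_padicValNat_mul_divMaxPow]
    · simp

end split

-- The conditions `0 < b` and `1 < m` only serve termination.
def carry (m j b c : ℕ) : Multiset ℕ :=
  if _ : 0 < b ∧ 1 < m ∧ b ≤ j then replicate (c % m) b + carry m j (m * b) (c / m)
  else replicate c b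
termination_by j + 1 - b
decreasing_by
  obtain ⟨hb, hm, -⟩ := ‹0 < b ∧ 1 < m ∧ b ≤ j›
  have := (Nat.lt_mul_iff_one_lt_left hb).2 hm
  omega

section carry

variable {m j b c : ℕ}

lemma split_carry (hm : 1 < m) (hb : 0 < b) :
    split m (carry m j b c) = split m (replicate c b) := by
  fun_induction carry m j b c with
  | case1 b c h ih =>
    rw [split_add, ih (Nat.mul_pos (by omega) hb), split_replicate_base_mul hm hb.ne',
      ← split_add, ← replicate_add, Nat.mod_add_div]
  | case2 => rfl

lemma exists_eq_pow_mul_of_mem_carry {x : ℕ} (hx : x ∈ carry m j b c) : ∃ i, x = m ^ i * b := by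
  fun_induction carry m j b c with
  | case1 b c h ih =>
    rcases mem_add.1 hx with hx | hx
    · exact ⟨0, by simp [eq_of_mem_replicate hx]⟩
    · obtain ⟨i, rfl⟩ := ih hx
      exact ⟨i + 1, by ring⟩
  | case2 => exact ⟨0, by simp [eq_of_mem_replicate hx]⟩

lemma le_of_mem_carry (hb : b ≤ m * j) {x : ℕ} (hx : x ∈ carry m j b c) : x ≤ m * j := by
  fun_induction carry m j b c with
  | case1 b c h ih =>
    rcases mem_add.1 hx with hx | hx
    · exact eq_of_mem_replicate hx ▸ hb
    · exact ih (Nat.mul_le_mul_left m h.2.2) hx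
  | case2 => exact eq_of_mem_replicate hx ▸ hb

lemma count_carry_lt (hm : 1 < m) (hb : 0 < b) {x : ℕ} (hx : x ≤ j) :
    (carry m j b c).count x < m := by
  fun_induction carry m j b c with
  | case1 b c h ih =>
    rw [count_add, count_replicate]
    split_ifs with hbx
    · subst hbx
      suffices b ∉ carry m j (m * b) (c / m) by
        rw [count_eq_zero.2 this]
        exact Nat.mod_lt _ (by omega)
      intro hmem
      obtain ⟨i, hi⟩ := exists_eq_pow_mul_of_mem_carry hmem
      have : b < m ^ i * (m * b) :=
        ((Nat.lt_mul_iff_one_lt_left hb).2 hm).trans_le (Nat.le_mul_of_pos_left _ (by positivity))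
      omega
    · exact (zero_add _).trans_lt (ih (Nat.mul_pos (by omega) hb))
  | case2 b c h =>
    rw [count_replicate, if_neg (by omega)]
    omega

lemma carry_eq (hm : 1 < m) (hb : 0 < b) {u : Multiset ℕ} (hpow : ∀ x ∈ u, ∃ i, x = m ^ i * b)
    (hle : ∀ x ∈ u, x ≤ m * j) (hcount : ∀ x ≤ j, u.count x < m) (hsum : u.sum = c * b) :
    carry m j b c = u := by
  fun_induction carry m j b c generalizing u with
  | case1 b c h ih =>
    -- The parts other than `b` are multiples of `m * b`, and `b` occurs fewer than `m` times,
    -- so that multiplicity is the last base-`m` digit of `c`.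
    set u' := u.filter (· ≠ b)
    have hu : replicate (u.count b) b + u' = u := by rw [← filter_eq', filter_add_not]
    have hpow' : ∀ x ∈ u', ∃ i, x = m ^ i * (m * b) := by
      intro x hx
      obtain ⟨hxu, hxb⟩ := mem_filter.1 hx
      obtain ⟨_ | i, rfl⟩ := hpow x hxu
      · simp at hxb
      · exact ⟨i, by ring⟩
    obtain ⟨k, hk⟩ : m * b ∣ u'.sum :=
      dvd_sum fun x hx => by obtain ⟨i, rfl⟩ := hpow' x hx; exact Dvd.intro_left _ rfl
    have hc : c = u.count b + m * k := by
      have := congrArg Multiset.sum hu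
      rw [sum_add, sum_replicate, hk, smul_eq_mul, hsum] at this
      exact Nat.eq_of_mul_eq_mul_right hb (by linarith)
    have hcm : u.count b < m := hcount b h.2.2
    have hmod : c % m = u.count b := by rw [hc, Nat.add_mul_mod_self_left, Nat.mod_eq_of_lt hcm]
    have hdiv : c / m = k := by
      rw [hc, Nat.add_mul_div_left _ _ (by omega), Nat.div_eq_of_lt hcm, zero_add]
    rw [hmod, ih (Nat.mul_pos (by omega) hb) hpow' (fun x hx => hle x (mem_of_mem_filter hx))
      (fun x hx => (count_le_of_le x (filter_le _ _)).trans_lt (hcount x hx))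
      (by rw [hk, hdiv]; ring), hu]
  | case2 b c h =>
    have hjb : j < b := by omega
    have hub : ∀ x ∈ u, x = b := by
      intro x hx
      obtain ⟨_ | i, rfl⟩ := hpow x hx
      · simp
      · have : m * j < m ^ (i + 1) * b := by
          calc m * j < m * b := Nat.mul_lt_mul_of_pos_left hjb (by omega)
            _ ≤ m ^ (i + 1) * b := Nat.mul_le_mul_right _ (Nat.le_self_pow i.succ_ne_zero m)
        exact absurd (hle _ hx) (by omega)
    have hu := eq_replicate_card.2 hub
    rw [hu, sum_replicate, smul_eq_mul] at hsum
    rw [hu, Nat.eq_of_mul_eq_mul_right hb hsum]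

end carry

def merge (m j : ℕ) (s : Multiset ℕ) : Multiset ℕ :=
  ∑ a ∈ s.toFinset, carry m j a (s.count a)

section merge

variable {m j : ℕ}

lemma split_merge (hm : 1 < m) {s : Multiset ℕ} (hs : ∀ a ∈ s, ¬ m ∣ a) :
    split m (merge m j s) = s := by
  calc split m (merge m j s) = ∑ a ∈ s.toFinset, replicate (s.count a) a := by
        rw [merge, split_sum]
        refine Finset.sum_congr rfl fun a ha => ?_
        rw [mem_toFinset] at ha
        rw [split_carry hm (Nat.pos_of_not_dvd (hs a ha)), split_replicate_of_not_dvd (hs a ha)]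
    _ = s := by simpa only [nsmul_singleton] using toFinset_sum_count_nsmul_eq s

lemma sum_merge (hm : 1 < m) {s : Multiset ℕ} (hs : ∀ a ∈ s, ¬ m ∣ a) :
    (merge m j s).sum = s.sum := by
  rw [← sum_split, split_merge hm hs]

lemma exists_eq_pow_mul_of_mem_merge {s : Multiset ℕ} {x : ℕ} (hx : x ∈ merge m j s) :
    ∃ a ∈ s, ∃ i, x = m ^ i * a := by
  obtain ⟨a, ha, hx⟩ := mem_sum.1 hx
  exact ⟨a, mem_toFinset.1 ha, exists_eq_pow_mul_of_mem_carry hx⟩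

lemma le_of_mem_merge {s : Multiset ℕ} (hs : ∀ a ∈ s, a ≤ m * j) {x : ℕ} (hx : x ∈ merge m j s) :
    x ≤ m * j := by
  obtain ⟨a, ha, hx⟩ := mem_sum.1 hx
  exact le_of_mem_carry (hs a (mem_toFinset.1 ha)) hx

lemma count_merge_lt (hm : 1 < m) {s : Multiset ℕ} (hs : ∀ a ∈ s, ¬ m ∣ a) {x : ℕ} (hx : x ≤ j) :
    (merge m j s).count x < m := by
  have hzero : ∀ a ∈ s.toFinset, a ≠ x.divMaxPow m → (carry m j a (s.count a)).count x = 0 := by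
    intro a ha hne
    refine count_eq_zero.2 fun hmem => hne ?_
    obtain ⟨i, rfl⟩ := exists_eq_pow_mul_of_mem_carry hmem
    rw [Nat.divMaxPow_pow_mul (by omega) (hs a (mem_toFinset.1 ha))]
  rw [merge, count_sum']
  by_cases hx' : x.divMaxPow m ∈ s.toFinset
  · rw [Finset.sum_eq_single_of_mem _ hx' hzero]
    exact count_carry_lt hm (Nat.pos_of_not_dvd (hs _ (mem_toFinset.1 hx'))) hx
  · rw [Finset.sum_eq_zero fun a ha => hzero a ha (by rintro rfl; exact hx' ha)]
    omega

lemma merge_split (hm : 1 < m) {t : Multiset ℕ} (hpos : ∀ b ∈ t, 0 < b)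
    (hle : ∀ b ∈ t, b ≤ m * j) (hcount : ∀ x ≤ j, t.count x < m) : merge m j (split m t) = t := by
  calc merge m j (split m t) = ∑ a ∈ (split m t).toFinset, t.filter (·.divMaxPow m = a) := by
        refine Finset.sum_congr rfl fun a ha => carry_eq hm ?_ ?_ ?_ ?_ (count_split_mul t a).symm
        · obtain ⟨b, hb, rfl⟩ := exists_of_mem_split (mem_toFinset.1 ha)
          exact Nat.pos_of_not_dvd (Nat.not_dvd_divMaxPow hm (hpos b hb).ne')
        · intro x hx
          exact ⟨padicValNat m x, by rw [← (mem_filter.1 hx).2, Nat.pow_padicValNat_mul_divMaxPow]⟩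
        · exact fun x hx => hle x (mem_of_mem_filter hx)
        · exact fun x hx => (count_le_of_le x (filter_le _ _)).trans_lt (hcount x hx)
    _ = t := sum_filter_fibers fun b hb =>
        mem_toFinset.2 (mem_bind.2 ⟨b, hb, mem_replicate.2 ⟨pow_ne_zero _ (by omega), rfl⟩⟩)

end merge

-- `s.sum = n ∧ IsB m s` says that `s` is counted by `B_m^{(m-1)}(n)`,
-- and `t.sum = N ∧ IsC m t` that `t` is counted by `C_m(N)`.
def IsB (m : ℕ) (s : Multiset ℕ) : Prop :=
  (∀ a ∈ s, 0 < a) ∧ (∀ a ∈ s, ¬ m ∣ a) ∧ ∃ L ∈ s, (∀ b ∈ s, b ≤ L) ∧ L % m = m - 1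

def IsC (m : ℕ) (t : Multiset ℕ) : Prop :=
  (∀ a ∈ t, 0 < a) ∧ ∃ j : ℕ, m * j ∈ t ∧ (∀ b ∈ t, b ≤ m * j) ∧ ∀ b ∈ t, b ≤ j → t.count b < m

def toC (m : ℕ) (s : Multiset ℕ) : Multiset ℕ :=
  (s.sup + 1) ::ₘ merge m ((s.sup + 1) / m) (s.erase s.sup)

def toB (m : ℕ) (t : Multiset ℕ) : Multiset ℕ :=
  (t.sup - 1) ::ₘ split m (t.erase t.sup)

section bijection

variable {m : ℕ}

lemma IsB.sup_mem {s : Multiset ℕ} (h : IsB m s) : s.sup ∈ s := by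
  obtain ⟨-, -, L, hL, hle, -⟩ := h
  rwa [sup_eq_of_mem hL hle]

lemma IsB.sup_mod {s : Multiset ℕ} (h : IsB m s) : s.sup % m = m - 1 := by
  obtain ⟨-, -, L, hL, hle, hmod⟩ := h
  rwa [sup_eq_of_mem hL hle]

lemma IsB.le_of_mem_erase_sup (hm : 1 < m) {s : Multiset ℕ} (h : IsB m s) {a : ℕ}
    (ha : a ∈ s.erase s.sup) : a ≤ m * ((s.sup + 1) / m) := by
  rw [Nat.mul_div_add_one_of_mod_eq (by omega) h.sup_mod]
  exact (le_sup (mem_of_mem_erase ha)).trans (Nat.le_succ _)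

lemma sum_toC (hm : 1 < m) {s : Multiset ℕ} (h : IsB m s) : (toC m s).sum = s.sum + 1 := by
  rw [toC, sum_cons, sum_merge hm fun a ha => h.2.1 a (mem_of_mem_erase ha), ← sum_erase h.sup_mem]
  ring

lemma sup_toC (hm : 1 < m) {s : Multiset ℕ} (h : IsB m s) : (toC m s).sup = s.sup + 1 := by
  refine sup_eq_of_mem (mem_cons_self _ _) fun b hb => ?_
  rcases mem_cons.1 hb with rfl | hb
  · rfl
  · rw [← Nat.mul_div_add_one_of_mod_eq (by omega) h.sup_mod]
    exact le_of_mem_merge (fun a ha => h.le_of_mem_erase_sup hm ha) hb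

lemma IsB.isC_toC (hm : 1 < m) {s : Multiset ℕ} (h : IsB m s) : IsC m (toC m s) := by
  have hj := Nat.mul_div_add_one_of_mod_eq (by omega : 0 < m) h.sup_mod
  set j := (s.sup + 1) / m
  have hjpos : 0 < j := Nat.pos_of_mul_pos_left (a := m) (by omega)
  have hjlt : j < m * j := (Nat.lt_mul_iff_one_lt_left hjpos).2 hm
  have hs : ∀ a ∈ s.erase s.sup, ¬ m ∣ a := fun a ha => h.2.1 a (mem_of_mem_erase ha)
  refine ⟨fun x hx => ?_, j, hj ▸ mem_cons_self _ _, fun x hx => ?_, fun x _ hx => ?_⟩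
  · rcases mem_cons.1 hx with rfl | hx
    · exact Nat.succ_pos _
    · obtain ⟨a, ha, i, rfl⟩ := exists_eq_pow_mul_of_mem_merge hx
      exact Nat.mul_pos (by positivity) (Nat.pos_of_not_dvd (hs a ha))
  · rcases mem_cons.1 hx with rfl | hx
    · exact hj.ge
    · exact le_of_mem_merge (fun a ha => h.le_of_mem_erase_sup hm ha) hx
  · rw [toC, count_cons_of_ne (by omega)]
    exact count_merge_lt hm hs hx

lemma toB_toC (hm : 1 < m) {s : Multiset ℕ} (h : IsB m s) : toB m (toC m s) = s := by
  rw [toB, sup_toC hm h, add_tsub_cancel_right, toC, erase_cons_head,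
    split_merge hm fun a ha => h.2.1 a (mem_of_mem_erase ha), cons_erase h.sup_mem]

lemma IsC.sup_mem {t : Multiset ℕ} (h : IsC m t) : t.sup ∈ t := by
  obtain ⟨-, j, hj, hle, -⟩ := h
  rwa [sup_eq_of_mem hj hle]

lemma IsC.not_dvd_and_lt_sup_of_mem_split (hm : 1 < m) {t : Multiset ℕ} (h : IsC m t) {a : ℕ}
    (ha : a ∈ split m (t.erase t.sup)) : ¬ m ∣ a ∧ a < t.sup := by
  obtain ⟨hpos, j, hj, hle, -⟩ := h
  obtain ⟨b, hb, rfl⟩ := exists_of_mem_split ha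
  have hbt := mem_of_mem_erase hb
  have hnd := Nat.not_dvd_divMaxPow hm (hpos b hbt).ne'
  refine ⟨hnd, lt_of_le_of_ne ((Nat.divMaxPow_le_self m b).trans (le_sup hbt)) ?_⟩
  rw [sup_eq_of_mem hj hle]
  exact fun heq => hnd (heq ▸ dvd_mul_right m j)

lemma sum_toB {t : Multiset ℕ} (h : IsC m t) : (toB m t).sum + 1 = t.sum := by
  have hpos := h.1 _ h.sup_mem
  rw [toB, sum_cons, sum_split, ← sum_erase h.sup_mem]
  omega

lemma sup_toB (hm : 1 < m) {t : Multiset ℕ} (h : IsC m t) : (toB m t).sup = t.sup - 1 := by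
  refine sup_eq_of_mem (mem_cons_self _ _) fun b hb => ?_
  rcases mem_cons.1 hb with rfl | hb
  · rfl
  · have := (h.not_dvd_and_lt_sup_of_mem_split hm hb).2
    omega

lemma IsC.isB_toB (hm : 1 < m) {t : Multiset ℕ} (h : IsC m t) : IsB m (toB m t) := by
  have ⟨hpos, j, hj, hle, _⟩ := h
  have hsup := sup_eq_of_mem hj hle
  have hjpos : 0 < j := Nat.pos_of_mul_pos_left (hpos _ hj)
  have hmj : m ≤ m * j := Nat.le_mul_of_pos_right m hjpos
  have hmod : (t.sup - 1) % m = m - 1 := hsup ▸ Nat.mul_sub_one_mod (by omega) hjpos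
  have hsplit := fun x (hx : x ∈ split m (t.erase t.sup)) => h.not_dvd_and_lt_sup_of_mem_split hm hx
  refine ⟨fun x hx => ?_, fun x hx => ?_, t.sup - 1, mem_cons_self _ _,
    fun x hx => sup_toB hm h ▸ le_sup hx, hmod⟩
  · rcases mem_cons.1 hx with rfl | hx
    · omega
    · exact Nat.pos_of_not_dvd (hsplit x hx).1
  · rcases mem_cons.1 hx with rfl | hx
    · intro hdvd
      have := Nat.mod_eq_zero_of_dvd hdvd
      omega
    · exact (hsplit x hx).1

lemma toC_toB (hm : 1 < m) {t : Multiset ℕ} (h : IsC m t) : toC m (toB m t) = t := by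
  have ⟨hpos, j, hj, hle, hcount⟩ := h
  have hsup := sup_eq_of_mem hj hle
  have hsup_pos : 0 < t.sup := hpos _ h.sup_mem
  have hj' : (t.sup - 1 + 1) / m = j := by
    rw [Nat.sub_add_cancel hsup_pos, hsup, Nat.mul_div_cancel_left _ (by omega)]
  have hcount' : ∀ x ≤ j, (t.erase t.sup).count x < m := by
    intro x hx
    refine (count_le_of_le x (erase_le _ _)).trans_lt ?_
    by_cases hxt : x ∈ t
    · exact hcount x hxt hx
    · rw [count_eq_zero.2 hxt]; omega
  rw [toC, sup_toB hm h, hj', toB, erase_cons_head,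
    merge_split hm (fun b hb => hpos b (mem_of_mem_erase hb))
      (fun b hb => hsup ▸ le_sup (mem_of_mem_erase hb)) hcount',
    Nat.sub_add_cancel hsup_pos, cons_erase h.sup_mem]

def equivBC (hm : 1 < m) (n : ℕ) :
    {s : Multiset ℕ // s.sum = n ∧ IsB m s} ≃ {t : Multiset ℕ // t.sum = n + 1 ∧ IsC m t} where
  toFun s := ⟨toC m s, by rw [sum_toC hm s.2.2, s.2.1], s.2.2.isC_toC hm⟩
  invFun t := ⟨toB m t, by have := sum_toB t.2.2; omega, t.2.2.isB_toB hm⟩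
  left_inv s := Subtype.ext (toB_toC hm s.2.2)
  right_inv t := Subtype.ext (toC_toB hm t.2.2)

end bijection

end LinZhang

theorem lin_zhang_general (m : ℕ) (hm : 2 ≤ m) (n : ℕ) :
    Nat.card {s : Multiset ℕ // s.sum = n ∧ (∀ a ∈ s, 0 < a) ∧ (∀ a ∈ s, ¬ m ∣ a) ∧
      ∃ L ∈ s, (∀ b ∈ s, b ≤ L) ∧ L % m = m - 1} =
    Nat.card {s : Multiset ℕ // s.sum = n + 1 ∧ (∀ a ∈ s, 0 < a) ∧
      ∃ j : ℕ, m * j ∈ s ∧ (∀ b ∈ s, b ≤ m * j) ∧ ∀ b ∈ s, b ≤ j → s.count b < m} :=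
  Nat.card_congr (LinZhang.equivBC hm n)

/-- Lin–Zhang: for `m ≥ 2` and `n ≥ 1`, the number of partitions of `n` into parts not
divisible by `m` whose largest part is `≡ m - 1 (mod m)` equals the number of partitions
of `n+1` whose largest part is divisible by `m`, say `m*j`, with all parts `≤ j`
occurring fewer than `m` times. -/
theorem lin_zhang (m : ℕ) (hm : 2 ≤ m) (n : ℕ) (hn : 0 < n) :
    Nat.card {s : Multiset ℕ // s.sum = n ∧ (∀ a ∈ s, 0 < a) ∧ (∀ a ∈ s, ¬ m ∣ a) ∧
      ∃ L ∈ s, (∀ b ∈ s, b ≤ L) ∧ L % m = m - 1} =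
    Nat.card {s : Multiset ℕ // s.sum = n + 1 ∧ (∀ a ∈ s, 0 < a) ∧
      ∃ j : ℕ, m * j ∈ s ∧ (∀ b ∈ s, b ≤ m * j) ∧ ∀ b ∈ s, b ≤ j → s.count b < m} :=
  lin_zhang_general m hm n
end

section
/- For every integer m ≥ 2, the generating function identity ∑_{n≥0} C_m(n) q^n = ∑_{n≥0} (q^m; q^m)_n · q^{mn} / (q; q)_{mn} holds as formal power series, where C_m(n) is the number of partitions of n whose largest part is divisible by m, say m·j, and all parts ≤ j occur fewer than m times (with C_m(0) = 1). -/
open PowerSeries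

noncomputable instance : TopologicalSpace (PowerSeries ℂ) :=
  inferInstanceAs (TopologicalSpace ((Unit →₀ ℕ) → ℂ))

/-- The formal variable `q`. -/
noncomputable def q : PowerSeries ℂ := PowerSeries.X

/-- Finite q-Pochhammer symbol `(a; b)_n = ∏_{i=0}^{n-1} (1 - a bⁱ)`. -/
noncomputable def poch (a b : PowerSeries ℂ) (n : ℕ) : PowerSeries ℂ :=
  ∏ i ∈ Finset.range n, (1 - a * b ^ i)

/-- Infinite q-Pochhammer symbol `(a; b)_∞ = ∏_{i≥0} (1 - a bⁱ)`. -/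
noncomputable def pochInf (a b : PowerSeries ℂ) : PowerSeries ℂ :=
  ∏' i : ℕ, (1 - a * b ^ i)

/-- `Cm m n`: number of partitions of `n` whose largest part is divisible by `m`,
say `m*j`, with all parts `≤ j` occurring fewer than `m` times; `Cm m 0 = 1`. -/
noncomputable def Cm (m n : ℕ) : ℕ :=
  if n = 0 then 1 else
  Nat.card {s : Multiset ℕ // s.sum = n ∧ (∀ a ∈ s, 0 < a) ∧
    ∃ j : ℕ, m * j ∈ s ∧ (∀ b ∈ s, b ≤ m * j) ∧ ∀ b ∈ s, b ≤ j → s.count b < m}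

/-! For `1 ≤ n ≤ N` let `G_N := (q^m; q^m)_n / (q; q)_N`. Writing
`(1 - q^{mi}) / (1 - q^i) = 1 + q^i + ⋯ + q^{(m-1)i}` for `i ≤ n`, `G_N` is the generating
function of partitions with parts `≤ N` in which every part `≤ n` occurs fewer than `m` times.
The `n`-th summand is `q^{mn} G_{mn} = G_{mn} - (1 - q^{mn}) G_{mn} = G_{mn} - G_{mn-1}`, which
counts those partitions whose largest part is exactly `mn`: the partitions counted by `C_m` with
`j = n`. The largest part determines `j`, so summing over `n` gives `C_m`. -/

open Finset

section GenFun

open PowerSeries.WithPiTopology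

theorem Nat.Partition.genFun_eq_prod_range {R : Type*} [CommSemiring R] [TopologicalSpace R]
    [T2Space R] {f : ℕ → ℕ → R} {N : ℕ} (hf : ∀ i, N < i → ∀ c, f i c = 0) :
    genFun f = ∏ i ∈ range N, (1 + ∑' j, f (i + 1) (j + 1) • X ^ ((i + 1) * (j + 1))) := by
  rw [← (hasProd_genFun f).tprod_eq]
  exact tprod_eq_prod fun i hi ↦ by simp [hf (i + 1) (by simpa using hi)]

theorem PowerSeries.one_sub_X_pow_mul_one_add_tsum {R : Type*} [CommRing R] [TopologicalSpace R]
    [IsTopologicalRing R] [T2Space R] {k : ℕ} (hk : k ≠ 0) :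
    (1 - X ^ k : R⟦X⟧) * (1 + ∑' j, X ^ (k * (j + 1))) = 1 := by
  have hX : constantCoeff ((X : R⟦X⟧) ^ k) = 0 := by simp [hk]
  have hgeom : (1 : R⟦X⟧) + ∑' j, X ^ (k * (j + 1)) = ∑' j, (X ^ k) ^ j := by
    rw [(summable_pow_of_constantCoeff_eq_zero hX).tsum_eq_zero_add]
    simp [← pow_mul]
  rw [hgeom, one_sub_mul_tsum_pow_of_constantCoeff_eq_zero hX]

theorem PowerSeries.one_sub_X_pow_mul_one_add_tsum_ite {R : Type*} [CommRing R]
    [TopologicalSpace R] {k m : ℕ} (hm : m ≠ 0) :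
    (1 - X ^ k : R⟦X⟧) * (1 + ∑' j, if j + 1 < m then X ^ (k * (j + 1)) else 0) =
      1 - X ^ (k * m) := by
  obtain ⟨m, rfl⟩ := Nat.exists_eq_add_one_of_ne_zero hm
  have hgeom : (1 : R⟦X⟧) + ∑' j, (if j + 1 < m + 1 then X ^ (k * (j + 1)) else 0) =
      ∑ j ∈ range (m + 1), (X ^ k) ^ j := by
    rw [tsum_eq_sum (s := range m) (fun j hj ↦ by simp_all), sum_ite_of_true (by simp),
      sum_range_succ']
    simp [← pow_mul, add_comm]
  rw [hgeom, mul_neg_geom_sum, pow_mul]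

theorem hasSum_natCast_mul_X_pow {R : Type*} [Semiring R] [TopologicalSpace R] (a : ℕ → ℕ) :
    HasSum (fun n ↦ (a n : R⟦X⟧) * X ^ n) (mk fun n ↦ (a n : R)) := by
  refine (hasSum_iff_hasSum_coeff _).2 fun d ↦ ?_
  simp only [coeff_mk, ← map_natCast (C (R := R)), coeff_C_mul_X_pow]
  convert hasSum_single d fun i hi ↦ if_neg (Ne.symm hi)
  simp

end GenFun

def restrictedCharacter (m j N i c : ℕ) : ℂ :=
  if i ≤ N ∧ (i ≤ j → c < m) then 1 else 0

def Nat.Partition.lowCountRestricted (n m j N : ℕ) : Finset n.Partition :=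
  {p | ∀ i ∈ p.parts, i ≤ N ∧ (i ≤ j → p.parts.count i < m)}

theorem coeff_genFun_restrictedCharacter (m j N d : ℕ) :
    coeff d (Nat.Partition.genFun (restrictedCharacter m j N)) =
      #(Nat.Partition.lowCountRestricted d m j N) := by
  simp_rw [Nat.Partition.coeff_genFun, Nat.Partition.lowCountRestricted, card_filter,
    Finsupp.prod, restrictedCharacter, prod_boole]
  simp

theorem poch_mul_genFun_restrictedCharacter {m j N : ℕ} (hm : m ≠ 0) (hjN : j ≤ N) :
    poch q q N * Nat.Partition.genFun (restrictedCharacter m j N) = poch (q ^ m) (q ^ m) j := by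
  have hfactor : ∀ i ∈ range N, (1 - q * q ^ i) * (1 + ∑' c,
      restrictedCharacter m j N (i + 1) (c + 1) • X ^ ((i + 1) * (c + 1))) =
        if i < j then 1 - q ^ m * (q ^ m) ^ i else 1 := by
    intro i hi
    rw [mem_range] at hi
    rw [q, ← pow_succ', ← pow_succ', ← pow_mul, mul_comm m]
    split_ifs with hij
    · simp only [restrictedCharacter, show i + 1 ≤ N by omega, show i + 1 ≤ j by omega,
        true_and, forall_const, ite_smul, one_smul, zero_smul]
      exact one_sub_X_pow_mul_one_add_tsum_ite hm
    · simp only [restrictedCharacter, show i + 1 ≤ N by omega, show ¬i + 1 ≤ j by omega,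
        true_and, false_imp_iff, if_true, one_smul]
      exact one_sub_X_pow_mul_one_add_tsum i.succ_ne_zero
  have hsupport : ∀ i, N < i → ∀ c, restrictedCharacter m j N i c = 0 := fun i hi c ↦ by
    simp [restrictedCharacter]; omega
  rw [Nat.Partition.genFun_eq_prod_range hsupport, poch, ← prod_mul_distrib]
  refine (prod_congr rfl hfactor).trans ?_
  rw [prod_ite, prod_const_one, mul_one, poch]
  congr 1
  ext i
  simp only [mem_filter, mem_range]
  omega

theorem constantCoeff_poch_q (N : ℕ) : constantCoeff (poch q q N) = 1 := by
  simp [poch, q, map_prod]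

theorem poch_q_succ (N : ℕ) : poch q q (N + 1) = poch q q N * (1 - q ^ (N + 1)) := by
  rw [poch, prod_range_succ, ← pow_succ', poch]

theorem poch_mul_q_pow_mul_inv_poch {m n : ℕ} (hm : 2 ≤ m) (hn : n ≠ 0) :
    poch (q ^ m) (q ^ m) n * q ^ (m * n) * (poch q q (m * n))⁻¹ =
      Nat.Partition.genFun (restrictedCharacter m n (m * n)) -
        Nat.Partition.genFun (restrictedCharacter m n (m * n - 1)) := by
  have hlt : n < m * n := by nlinarith [Nat.pos_of_ne_zero hn]
  obtain ⟨N, hN⟩ : ∃ N, m * n = N + 1 := ⟨m * n - 1, by omega⟩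
  rw [eq_comm, PowerSeries.eq_mul_inv_iff_mul_eq (by simp [constantCoeff_poch_q]), hN,
    Nat.add_sub_cancel]
  calc _ = poch q q (N + 1) * Nat.Partition.genFun (restrictedCharacter m n (N + 1)) -
        (1 - q ^ (N + 1)) * (poch q q N * Nat.Partition.genFun (restrictedCharacter m n N)) := by
        rw [poch_q_succ]; ring
    _ = poch (q ^ m) (q ^ m) n * q ^ (N + 1) := by
        rw [poch_mul_genFun_restrictedCharacter (by omega) (by omega),
          poch_mul_genFun_restrictedCharacter (by omega) (by omega)]
        ring

def IsCmPartition (m j : ℕ) (s : Multiset ℕ) : Prop :=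
  m * j ∈ s ∧ (∀ b ∈ s, b ≤ m * j) ∧ ∀ b ∈ s, b ≤ j → s.count b < m

instance (m j : ℕ) : DecidablePred (IsCmPartition m j) :=
  fun _ ↦ inferInstanceAs (Decidable (_ ∧ _ ∧ _))

theorem IsCmPartition.unique {m j j' : ℕ} {s : Multiset ℕ} (hm : m ≠ 0)
    (h : IsCmPartition m j s) (h' : IsCmPartition m j' s) : j = j' :=
  Nat.eq_of_mul_eq_mul_left (Nat.pos_of_ne_zero hm) <| le_antisymm (h'.2.1 _ h.1) (h.2.1 _ h'.1)

theorem IsCmPartition.pos_and_le {m j d : ℕ} {p : d.Partition} (hm : m ≠ 0)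
    (h : IsCmPartition m j p.parts) : 0 < j ∧ j ≤ d :=
  ⟨Nat.pos_of_mul_pos_left (p.parts_pos h.1),
    (Nat.le_mul_of_pos_left j (Nat.pos_of_ne_zero hm)).trans (Nat.Partition.le_of_mem_parts h.1)⟩

theorem card_lowCountRestricted_eq_add (m j d : ℕ) :
    #(Nat.Partition.lowCountRestricted d m j (m * j)) =
      #(Nat.Partition.lowCountRestricted d m j (m * j - 1)) +
        #{p : d.Partition | IsCmPartition m j p.parts} := by
  rw [← card_filter_add_card_filter_not (p := fun p : d.Partition ↦ m * j ∈ p.parts),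
    add_comm]
  congr 2 <;> ext p <;>
    simp only [Nat.Partition.lowCountRestricted, IsCmPartition, mem_filter, mem_univ, true_and] <;>
    grind

theorem coeff_poch_mul_q_pow_mul_inv_poch {m n : ℕ} (hm : 2 ≤ m) (hn : n ≠ 0) (d : ℕ) :
    coeff d (poch (q ^ m) (q ^ m) n * q ^ (m * n) * (poch q q (m * n))⁻¹) =
      #{p : d.Partition | IsCmPartition m n p.parts} := by
  rw [poch_mul_q_pow_mul_inv_poch hm hn, map_sub, coeff_genFun_restrictedCharacter,
    coeff_genFun_restrictedCharacter, card_lowCountRestricted_eq_add]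
  push_cast
  ring

theorem Cm_eq_sum_card_isCmPartition {m : ℕ} (hm : m ≠ 0) (d : ℕ) :
    Cm m d = (if d = 0 then 1 else 0) +
      ∑ j ∈ range d, #{p : d.Partition | IsCmPartition m (j + 1) p.parts} := by
  classical
  rcases eq_or_ne d 0 with rfl | hd
  · simp [Cm]
  have hcard : Nat.card {s : Multiset ℕ // s.sum = d ∧ (∀ a ∈ s, 0 < a) ∧
      ∃ j, IsCmPartition m j s} = #{p : d.Partition | ∃ j, IsCmPartition m j p.parts} := by
    rw [← Nat.card_eq_finsetCard]
    exact Nat.card_congr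
      { toFun s := ⟨⟨s.1, s.2.2.1 _, s.2.1⟩, mem_filter.2 ⟨mem_univ _, s.2.2.2⟩⟩
        invFun p := ⟨p.1.parts, p.1.parts_sum, fun _ ↦ p.1.parts_pos, (mem_filter.1 p.2).2⟩
        left_inv _ := rfl
        right_inv _ := rfl }
  have hunion : ({p : d.Partition | ∃ j, IsCmPartition m j p.parts} : Finset _) =
      (range d).biUnion fun j ↦ {p : d.Partition | IsCmPartition m (j + 1) p.parts} := by
    ext p
    simp only [mem_filter, mem_univ, true_and, mem_biUnion, mem_range]
    constructor
    · rintro ⟨j, hj⟩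
      have hj_mem := hj.pos_and_le hm
      exact ⟨j - 1, by omega, by rwa [Nat.sub_add_cancel hj_mem.1]⟩
    · rintro ⟨j, -, hj⟩
      exact ⟨j + 1, hj⟩
  rw [Cm, if_neg hd, if_neg hd, zero_add, ← card_biUnion, ← hunion, ← hcard]
  · rfl
  · intro j _ j' _ hne
    simp only [Function.onFun, disjoint_filter]
    exact fun p _ h h' ↦ hne (by simpa using h.unique hm h')

/-- Generating function of `Cm`: `∑ Cm(n) qⁿ = ∑ (q^m;q^m)_n q^{mn} / (q;q)_{mn}`. -/
theorem Cm_genfun (m : ℕ) (hm : 2 ≤ m) :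
    ∑' n : ℕ, (Cm m n : PowerSeries ℂ) * q ^ n =
    ∑' n : ℕ, poch (q ^ m) (q ^ m) n * q ^ (m * n) * (poch q q (m * n))⁻¹ := by
  have hcoeff (d : ℕ) : HasSum
      (fun n ↦ coeff d (poch (q ^ m) (q ^ m) n * q ^ (m * n) * (poch q q (m * n))⁻¹))
      (coeff d (mk fun n ↦ (Cm m n : ℂ))) := by
    have hvanish (n : ℕ) (hn : n ∉ range (d + 1)) :
        coeff d (poch (q ^ m) (q ^ m) n * q ^ (m * n) * (poch q q (m * n))⁻¹) = 0 := by
      rw [mem_range, not_lt] at hn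
      rw [coeff_poch_mul_q_pow_mul_inv_poch hm (by omega), Nat.cast_eq_zero, card_eq_zero,
        filter_eq_empty_iff]
      exact fun p _ h ↦ by have := h.pos_and_le (by omega); omega
    convert hasSum_sum_of_ne_finset_zero (L := .unconditional ℕ) hvanish using 1
    rw [sum_range_succ', coeff_mk, Cm_eq_sum_card_isCmPartition (by omega),
      sum_congr rfl fun n _ ↦ coeff_poch_mul_q_pow_mul_inv_poch hm n.succ_ne_zero d]
    simp [poch, coeff_one, add_comm]
  have := PowerSeries.WithPiTopology.instT2Space ℂ
  exact (hasSum_natCast_mul_X_pow (Cm m)).tsum_eq.trans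
    ((PowerSeries.WithPiTopology.hasSum_iff_hasSum_coeff _).2 hcoeff).tsum_eq.symm
end

section
/- The generating function of partitions into nonnegative parts where the smallest part occurs exactly m times and all other parts occur fewer than m times is ∑_{n≥0} D_m(n) q^n = ∑_{j≥0} q^{mj} · (q^{m(j+1)}; q^m)_∞ / (q^{j+1}; q)_∞. -/
open PowerSeries

/-- `Dm m n`: number of partitions of `n` into nonnegative parts (0 allowed) whose
smallest part occurs exactly `m` times and every other part occurs fewer than `m` times. -/
noncomputable def Dm (m n : ℕ) : ℕ :=
  Nat.card {s : Multiset ℕ // s.sum = n ∧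
    ∃ a ∈ s, s.count a = m ∧ (∀ b ∈ s, a ≤ b) ∧ ∀ b ∈ s, b ≠ a → s.count b < m}

/-! Deleting the `m` copies of the smallest part `j` from a partition counted by `Dm m n` leaves a
partition of `n - m j` into parts `> j`, each used fewer than `m` times, and conversely. The
generating function of the latter is `∏_{i > j} (1 + q^i + ⋯ + q^{(m-1)i})`, and multiplying each
factor by `1 - q^i` turns this product into `(q^{m(j+1)}; q^m)_∞ / (q^{j+1}; q)_∞`. Summing over
`j` with weight `q^{mj}` gives the identity. -/

open Finset Filter

namespace PowerSeries.WithPiTopology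

variable {R : Type*} [TopologicalSpace R]

theorem multipliable_one_sub_mul_pow [CommRing R] (a : R⟦X⟧) {b : R⟦X⟧}
    (hb : constantCoeff b = 0) : Multipliable fun i ↦ 1 - a * b ^ i := by
  simp_rw [sub_eq_add_neg]
  apply multipliable_one_add_of_tendsto_order_atTop_nhds_top
  refine ENat.tendsto_nhds_top_iff_natCast_lt.mpr fun n ↦
    eventually_atTop.mpr ⟨n + 1, fun i hi ↦ ?_⟩
  rw [order_neg]
  calc (n : ℕ∞) < i := by exact_mod_cast hi
    _ ≤ (b ^ i).order := le_order_pow_of_constantCoeff_eq_zero i hb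
    _ ≤ a.order + (b ^ i).order := le_add_self
    _ ≤ (a * b ^ i).order := le_order_mul _ _

theorem one_add_tsum_ite_smul_X_pow_eq_sum_range [CommSemiring R] {m : ℕ} (hm : 0 < m) (k : ℕ) :
    1 + ∑' c, (if c + 1 < m then (1 : R) else 0) • (X : R⟦X⟧) ^ (k * (c + 1)) =
      ∑ c ∈ range m, X ^ (k * c) := by
  obtain ⟨m, rfl⟩ := Nat.exists_add_one_eq.mpr hm
  rw [tsum_eq_sum (s := range m) fun c hc ↦ by simp_all, sum_range_succ', add_comm, mul_zero,
    pow_zero]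
  exact congrArg (· + 1) (sum_congr rfl fun c hc ↦ by simp [mem_range.mp hc])

end PowerSeries.WithPiTopology

namespace Nat.Partition

def countRestrictedAbove (n m j : ℕ) : Finset n.Partition :=
  Finset.univ.filter fun p ↦ ∀ i ∈ p.parts, j < i ∧ p.parts.count i < m

open PowerSeries.WithPiTopology

variable {R : Type*} [CommSemiring R] [TopologicalSpace R] [T2Space R]

theorem hasProd_powerSeriesMk_card_countRestrictedAbove {m : ℕ} (hm : 0 < m) (j : ℕ) :
    HasProd (fun i ↦ ∑ c ∈ range m, (X : R⟦X⟧) ^ ((j + 1 + i) * c))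
      (PowerSeries.mk fun n ↦ (#(countRestrictedAbove n m j) : R)) := by
  have h := hasProd_genFun (fun i c ↦ if j < i ∧ c < m then (1 : R) else 0)
  have hfactor (i : ℕ) : 1 + ∑' c, (if j < i + 1 ∧ c + 1 < m then (1 : R) else 0) •
      (X : R⟦X⟧) ^ ((i + 1) * (c + 1)) =
      if j ≤ i then ∑ c ∈ range m, X ^ ((i + 1) * c) else 1 := by
    split_ifs with hij
    · simpa [Nat.lt_succ_of_le hij] using
        one_add_tsum_ite_smul_X_pow_eq_sum_range (R := R) hm (i + 1)
    · simp [show ¬ j < i + 1 by omega]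
  simp_rw [hfactor] at h
  rw [← (add_left_injective j).hasProd_iff
    fun i hi ↦ if_neg fun hij ↦ hi ⟨i - j, by simp [hij]⟩] at h
  convert h using 1
  · ext i
    simp [add_comm, add_assoc, add_left_comm]
  · simp_rw [genFun, countRestrictedAbove, card_filter, Finsupp.prod, prod_boole]
    simp

end Nat.Partition

open Nat.Partition

-- The topology fixed above is `PowerSeries.WithPiTopology`'s, so its instances transfer.
instance : T2Space (PowerSeries ℂ) := PowerSeries.WithPiTopology.instT2Space ℂ

instance : IsTopologicalRing (PowerSeries ℂ) := PowerSeries.WithPiTopology.instIsTopologicalRing ℂ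

theorem hasProd_pochInf (a : ℂ⟦X⟧) {b : ℂ⟦X⟧} (hb : constantCoeff b = 0) :
    HasProd (fun i ↦ 1 - a * b ^ i) (pochInf a b) :=
  (PowerSeries.WithPiTopology.multipliable_one_sub_mul_pow a hb).hasProd

theorem constantCoeff_pochInf {a b : ℂ⟦X⟧} (ha : constantCoeff a = 0) (hb : constantCoeff b = 0) :
    constantCoeff (pochInf a b) = 1 := by
  have h := (hasProd_pochInf a hb).map constantCoeff
    (PowerSeries.WithPiTopology.continuous_constantCoeff ℂ)
  simp only [Function.comp_def, map_sub, map_one, map_mul, ha, zero_mul, sub_zero] at h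
  exact h.unique hasProd_one

theorem pochInf_q_pow_mul_eq {m : ℕ} (hm : 0 < m) (j : ℕ) :
    pochInf (q ^ (m * (j + 1))) (q ^ m) =
      PowerSeries.mk (fun n ↦ (#(countRestrictedAbove n m j) : ℂ)) * pochInf (q ^ (j + 1)) q := by
  have hG : HasProd (fun i ↦ ∑ c ∈ range m, (X : ℂ⟦X⟧) ^ ((j + 1 + i) * c))
      (PowerSeries.mk fun n ↦ (#(countRestrictedAbove n m j) : ℂ)) :=
    hasProd_powerSeriesMk_card_countRestrictedAbove hm j
  refine ((hG.mul (hasProd_pochInf (q ^ (j + 1)) (by simp [q]))).congr_fun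
    (g := fun i ↦ 1 - q ^ (m * (j + 1)) * (q ^ m) ^ i) fun i ↦ ?_).tprod_eq
  simp only [q, pow_mul, ← pow_add, geom_sum_mul_neg]
  ring

theorem q_pow_mul_pochInf_div_pochInf {m : ℕ} (hm : 0 < m) (j : ℕ) :
    q ^ (m * j) * pochInf (q ^ (m * (j + 1))) (q ^ m) * (pochInf (q ^ (j + 1)) q)⁻¹ =
      q ^ (m * j) * PowerSeries.mk (fun n ↦ (#(countRestrictedAbove n m j) : ℂ)) := by
  rw [pochInf_q_pow_mul_eq hm, mul_assoc, mul_assoc, PowerSeries.mul_inv_cancel _ (by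
    simp [constantCoeff_pochInf (a := q ^ (j + 1)) (b := q) (by simp [q]) (by simp [q])]), mul_one]

theorem Multiset.filter_lt_add_replicate_count {α : Type*} [LinearOrder α] {s : Multiset α} {j : α}
    (h : ∀ b ∈ s, j ≤ b) : s.filter (j < ·) + Multiset.replicate (s.count j) j = s := by
  conv_rhs => rw [← Multiset.filter_add_not (j < ·) s]
  rw [← Multiset.filter_eq']
  congr 1
  exact Multiset.filter_congr fun b hb ↦
    ⟨fun hbj ↦ hbj ▸ lt_irrefl j, fun hjb ↦ le_antisymm (not_lt.mp hjb) (h b hb)⟩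

def dmFiber (m n j : ℕ) : Set (Multiset ℕ) :=
  {s | s.sum = n ∧ s.count j = m ∧ (∀ b ∈ s, j ≤ b) ∧ ∀ b ∈ s, b ≠ j → s.count b < m}

theorem filter_lt_add_replicate_of_mem_dmFiber {m n j : ℕ} {s : Multiset ℕ}
    (hs : s ∈ dmFiber m n j) : s.filter (j < ·) + Multiset.replicate m j = s :=
  hs.2.1 ▸ Multiset.filter_lt_add_replicate_count hs.2.2.1

def dmFiberEquiv (m n j : ℕ) : dmFiber m (n + m * j) j ≃ countRestrictedAbove n m j where
  toFun s :=
    have hs := filter_lt_add_replicate_of_mem_dmFiber s.2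
    ⟨⟨s.1.filter (j < ·), fun hi ↦ (Nat.zero_le j).trans_lt (Multiset.of_mem_filter hi), by
      have := congrArg Multiset.sum hs
      rw [Multiset.sum_add, Multiset.sum_replicate, smul_eq_mul, s.2.1] at this
      omega⟩, by
      simp only [countRestrictedAbove, mem_filter, mem_univ, true_and]
      intro i hi
      have hji := Multiset.of_mem_filter hi
      rw [Multiset.count_filter_of_pos hji]
      exact ⟨hji, s.2.2.2.2 i (Multiset.mem_of_mem_filter hi) hji.ne'⟩⟩
  invFun p := ⟨p.1.parts + Multiset.replicate m j, by
    have hp := (mem_filter.mp p.2).2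
    have hj : j ∉ p.1.parts := fun h ↦ (hp j h).1.false
    refine ⟨by simp [p.1.parts_sum], by simp [Multiset.count_eq_zero.mpr hj], ?_, ?_⟩
    · intro b hb
      rcases Multiset.mem_add.mp hb with h | h
      exacts [(hp b h).1.le, (Multiset.eq_of_mem_replicate h).ge]
    · intro b hb hbj
      have hb' : b ∈ p.1.parts := (Multiset.mem_add.mp hb).resolve_right
        fun h ↦ hbj (Multiset.eq_of_mem_replicate h)
      simpa [Multiset.count_replicate, Ne.symm hbj] using (hp b hb').2⟩
  left_inv s := Subtype.ext (filter_lt_add_replicate_of_mem_dmFiber s.2)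
  right_inv p := by
    have hp := (mem_filter.mp p.2).2
    refine Subtype.ext (Nat.Partition.ext ?_)
    change (p.1.parts + Multiset.replicate m j).filter (j < ·) = p.1.parts
    rw [Multiset.filter_add, Multiset.filter_eq_self.mpr fun b hb ↦ (hp b hb).1,
      Multiset.filter_eq_nil.mpr fun b hb ↦ by simp [Multiset.eq_of_mem_replicate hb], add_zero]

theorem card_dmFiber_add (m n j : ℕ) :
    Nat.card (dmFiber m (n + m * j) j) = #(countRestrictedAbove n m j) :=
  (Nat.card_congr (dmFiberEquiv m n j)).trans (Nat.card_eq_finsetCard _)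

theorem dmFiber_eq_empty_of_lt {m n j : ℕ} (h : n < m * j) : dmFiber m n j = ∅ := by
  refine Set.eq_empty_of_forall_notMem fun s hs ↦ ?_
  have := congrArg Multiset.sum (filter_lt_add_replicate_of_mem_dmFiber hs)
  rw [Multiset.sum_add, Multiset.sum_replicate, smul_eq_mul, hs.1] at this
  omega

instance finite_dmFiber (m n j : ℕ) : Finite (dmFiber m n j) := by
  by_cases h : m * j ≤ n
  · obtain ⟨k, rfl⟩ := Nat.exists_eq_add_of_le' h
    exact Finite.of_equiv _ (dmFiberEquiv m k j).symm
  · rw [dmFiber_eq_empty_of_lt (not_le.mp h)]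
    infer_instance

theorem mem_of_mem_dmFiber {m n j : ℕ} {s : Multiset ℕ} (hm : 0 < m) (hs : s ∈ dmFiber m n j) :
    j ∈ s :=
  Multiset.count_pos.mp (hs.2.1.symm ▸ hm)

theorem Dm_eq_sum_card_dmFiber {m : ℕ} (hm : 0 < m) (n : ℕ) :
    Dm m n = ∑ j ∈ range (n + 1), Nat.card (dmFiber m n j) := by
  let e : (Σ j : Fin (n + 1), dmFiber m n j) ≃ {s : Multiset ℕ // s.sum = n ∧
      ∃ a ∈ s, s.count a = m ∧ (∀ b ∈ s, a ≤ b) ∧ ∀ b ∈ s, b ≠ a → s.count b < m} := by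
    refine Equiv.ofBijective (fun s ↦ ⟨s.2.1, s.2.2.1, s.1, mem_of_mem_dmFiber hm s.2.2,
      s.2.2.2⟩) ⟨?_, ?_⟩
    · rintro ⟨j, s, hs⟩ ⟨j', s', hs'⟩ h
      obtain rfl : s = s' := congrArg Subtype.val h
      exact Sigma.subtype_ext (Fin.ext (le_antisymm (hs.2.2.1 j' (mem_of_mem_dmFiber hm hs'))
        (hs'.2.2.1 j (mem_of_mem_dmFiber hm hs)))) rfl
    · rintro ⟨s, hsum, a, ha, hs⟩
      exact ⟨⟨⟨a, Nat.lt_succ_of_le ((Multiset.le_sum_of_mem ha).trans_eq hsum)⟩, s, hsum, hs⟩, rfl⟩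
  rw [Dm, ← Nat.card_congr e, Nat.card_sigma]
  exact Fin.sum_univ_eq_sum_range (fun j ↦ Nat.card (dmFiber m n j)) (n + 1)

theorem coeff_q_pow_mul_mk_card (m n j : ℕ) :
    coeff n (q ^ (m * j) * PowerSeries.mk fun k ↦ (#(countRestrictedAbove k m j) : ℂ)) =
      Nat.card (dmFiber m n j) := by
  rw [q, coeff_X_pow_mul']
  by_cases h : m * j ≤ n
  · obtain ⟨k, rfl⟩ := Nat.exists_eq_add_of_le' h
    rw [if_pos h, Nat.add_sub_cancel, coeff_mk, card_dmFiber_add]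
  · rw [if_neg h, dmFiber_eq_empty_of_lt (not_le.mp h), Nat.card_of_isEmpty, Nat.cast_zero]

theorem hasSum_q_pow_mul_mk_card {m : ℕ} (hm : 0 < m) :
    HasSum (fun j ↦ q ^ (m * j) * PowerSeries.mk fun k ↦ (#(countRestrictedAbove k m j) : ℂ))
      (PowerSeries.mk fun n ↦ (Dm m n : ℂ)) := by
  refine (PowerSeries.WithPiTopology.hasSum_iff_hasSum_coeff ℂ).mpr fun n ↦ ?_
  simp only [coeff_q_pow_mul_mk_card, coeff_mk, Dm_eq_sum_card_dmFiber hm, Nat.cast_sum]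
  refine hasSum_sum_of_ne_finset_zero fun j hj ↦ ?_
  rw [dmFiber_eq_empty_of_lt (lt_of_lt_of_le (by simpa using hj) (Nat.le_mul_of_pos_left j hm))]
  simp

theorem hasSum_Dm_mul_q_pow (m : ℕ) :
    HasSum (fun n ↦ (Dm m n : ℂ⟦X⟧) * q ^ n) (PowerSeries.mk fun n ↦ (Dm m n : ℂ)) := by
  have h : HasSum (fun n ↦ monomial n (coeff n (PowerSeries.mk fun n ↦ (Dm m n : ℂ))))
      (PowerSeries.mk fun n ↦ (Dm m n : ℂ)) :=
    PowerSeries.hasSum_of_monomials_self _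
  refine h.congr_fun fun n ↦ ?_
  simp [monomial_eq_C_mul_X_pow, q, map_natCast]

/-- Generating function of `Dm`:
`∑ Dm(n) qⁿ = ∑_{j≥0} q^{mj} (q^{m(j+1)};q^m)_∞ / (q^{j+1};q)_∞`. -/
theorem Dm_genfun (m : ℕ) (hm : 2 ≤ m) :
    ∑' n : ℕ, (Dm m n : PowerSeries ℂ) * q ^ n =
    ∑' j : ℕ, q ^ (m * j) * pochInf (q ^ (m * (j + 1))) (q ^ m) *
      (pochInf (q ^ (j + 1)) q)⁻¹ := by
  have hm0 : 0 < m := by omega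
  rw [(hasSum_Dm_mul_q_pow m).tsum_eq, tsum_congr (q_pow_mul_pochInf_div_pochInf hm0),
    (hasSum_q_pow_mul_mk_card hm0).tsum_eq]
end

section
/- As formal power series, ∑_{n≥0} q^{3n} (q^{n+1}; q)_∞ [(ω q^{n+1}; q)_∞ + (ω^{-1} q^{n+1}; q)_∞] = 2 − q − 2q² + ∑_{n≥2} (−1)^n χ₃(n−1) q^{T(n)+1}, where ω = e^{2πi/3}, T(n) = n(n+1)/2, and χ₃(k) = 2 if 3 | k and −1 otherwise. -/
open PowerSeries

/-- `χ₃(k) = 2` if `3 ∣ k`, and `-1` otherwise. -/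
noncomputable def chi3 (k : ℕ) : ℂ := if 3 ∣ k then 2 else -1

/-!
Write `S_N(a) = ∑ₙ q^{Nn} (q^{n+1};q)_∞ (aq^{n+1};q)_∞`. Peeling the first factor off both
products shows that `Y_K = S_{K+1}(a)` satisfies `q^{K+1} Y_K = Y_K - (1+a) Y_{K+1} + a Y_{K+2}`,
and so does the partial theta sum `Y_K = ∑ₘ (-a)^m q^{T(m)} (q^{m+1};q)_K`. Both agree with
`(q;q)_∞ (aq;q)_∞` modulo `q^{K+1}` (for the theta sum this is Euler's expansion of
`(aq;q)_∞`), and a solution of the recurrence that vanishes modulo `q^{K+1}` at every `K`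
vanishes identically, so the two are equal. For `K = 2` and `a = ω^{±1}` the coefficients
become `(-1)^m (ω^m + ω^{-m}) = (-1)^m χ₃(m)`, and since `χ₃(m) + χ₃(m+1) + χ₃(m+2) = 0`
the resulting sum telescopes to the stated theta series.
-/

instance : T2Space ℂ⟦X⟧ := PowerSeries.WithPiTopology.instT2Space ℂ

instance : IsTopologicalRing ℂ⟦X⟧ := PowerSeries.WithPiTopology.instIsTopologicalRing ℂ

namespace PowerSeries

open Filter

theorem eq_zero_of_forall_X_pow_dvd {R : Type*} [Semiring R] {f : R⟦X⟧} (h : ∀ n, X ^ n ∣ f) :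
    f = 0 := by
  ext n
  exact X_pow_dvd_iff.mp (h (n + 1)) n n.lt_succ_self

theorem eq_zero_of_X_pow_dvd_of_step {R : Type*} [Semiring R] {D : ℕ → R⟦X⟧}
    (base : ∀ K, X ^ (K + 1) ∣ D K)
    (step : ∀ e K, (∀ j, X ^ e ∣ D j) → (∀ j, K < j → X ^ (e + 1) ∣ D j) → X ^ (e + 1) ∣ D K)
    (K : ℕ) : D K = 0 := by
  have h : ∀ e j, X ^ e ∣ D j := by
    intro e
    induction e with
    | zero => simp
    | succ e ih =>
      -- downward induction on `j`, starting from the indices `j ≥ e` covered by `base`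
      have : ∀ d j, e ≤ j + d → X ^ (e + 1) ∣ D j := by
        intro d
        induction d with
        | zero => exact fun j hj => (pow_dvd_pow X (by omega)).trans (base j)
        | succ d ihd => exact fun j hj => step e j ih fun i hi => ihd i (by omega)
      exact fun j => this e j (by omega)
  exact eq_zero_of_forall_X_pow_dvd fun e => h e K

theorem tendsto_order_atTop_of_X_pow_dvd {R : Type*} [Semiring R] {f : ℕ → R⟦X⟧}
    (hf : ∀ n, X ^ n ∣ f n) : Tendsto (fun n => (f n).order) atTop (nhds ⊤) := by
  refine ENat.tendsto_nhds_top_iff_natCast_lt.mpr fun n =>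
    eventually_atTop.mpr ⟨n + 1, fun m hm => ?_⟩
  exact (Nat.cast_lt.mpr hm).trans_le (nat_le_order _ _ (X_pow_dvd_iff.mp (hf m)))

theorem summable_of_X_pow_dvd {f : ℕ → ℂ⟦X⟧} (hf : ∀ n, X ^ n ∣ f n) : Summable f :=
  WithPiTopology.summable_of_tendsto_order_atTop_nhds_top ℂ (tendsto_order_atTop_of_X_pow_dvd hf)

theorem multipliable_one_sub_mul_X_pow (b : ℂ⟦X⟧) : Multipliable fun i => 1 - b * X ^ i := by
  simp_rw [sub_eq_add_neg]
  exact WithPiTopology.multipliable_one_add_of_tendsto_order_atTop_nhds_top ℂ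
    (tendsto_order_atTop_of_X_pow_dvd fun i => (dvd_mul_left _ b).neg_right)

theorem isClosed_setOf_X_pow_dvd_sub (k : ℕ) (g : ℂ⟦X⟧) :
    IsClosed {f : ℂ⟦X⟧ | X ^ k ∣ f - g} := by
  simp only [X_pow_dvd_iff, map_sub, sub_eq_zero, Set.ofPred_forall]
  exact isClosed_iInter fun m => isClosed_iInter fun _ =>
    isClosed_eq (WithPiTopology.continuous_coeff ℂ m) continuous_const

theorem X_pow_dvd_of_hasSum {f : ℕ → ℂ⟦X⟧} {s : ℂ⟦X⟧} {k : ℕ} (hs : HasSum f s)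
    (hf : ∀ n, X ^ k ∣ f n) : X ^ k ∣ s := by
  simpa using (isClosed_setOf_X_pow_dvd_sub k 0).mem_of_tendsto hs
    (Eventually.of_forall fun t => by simpa using Finset.dvd_sum fun n _ => hf n)

theorem X_pow_dvd_tprod_sub_one {f : ℕ → ℂ⟦X⟧} {k : ℕ} (hf : ∀ n, X ^ k ∣ f n - 1) :
    X ^ k ∣ ∏' n, f n - 1 := by
  by_cases hmul : Multipliable f
  · refine (isClosed_setOf_X_pow_dvd_sub k 1).mem_of_tendsto hmul.hasProd
      (Eventually.of_forall fun t =>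
        Finset.prod_induction f (fun g => X ^ k ∣ g - 1) ?_ (by simp) fun n _ => hf n)
    intro g h hg hh
    rw [show g * h - 1 = g * (h - 1) + (g - 1) by ring]
    exact dvd_add (hh.mul_left g) hg
  · simp [tprod_eq_one_of_not_multipliable hmul]

theorem hasSum_sub_succ_of_X_pow_dvd {s : ℕ → ℂ⟦X⟧} (hs : ∀ n, X ^ n ∣ s n) :
    HasSum (fun n => s n - s (n + 1)) (s 0) := by
  have hS := (summable_of_X_pow_dvd hs).hasSum
  simpa using hS.sub ((hasSum_nat_add_iff' 1).mpr hS)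

end PowerSeries

theorem X_pow_dvd_q_pow_mul {m n : ℕ} (h : m ≤ n) (y : ℂ⟦X⟧) : X ^ m ∣ q ^ n * y :=
  (pow_dvd_pow X h).mul_right y

theorem X_pow_succ_dvd_q_pow_succ_mul {e : ℕ} {y : ℂ⟦X⟧} (hy : X ^ e ∣ y) (j : ℕ) :
    X ^ (e + 1) ∣ q ^ (j + 1) * y := by
  rw [pow_succ']
  exact mul_dvd_mul (dvd_pow_self X j.succ_ne_zero) hy

theorem poch_succ (b : ℂ⟦X⟧) (K : ℕ) : poch b q (K + 1) = poch b q K * (1 - b * q ^ K) :=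
  Finset.prod_range_succ _ _

theorem poch_succ' (b : ℂ⟦X⟧) (K : ℕ) : poch b q (K + 1) = (1 - b) * poch (b * q) q K := by
  simp only [poch, Finset.prod_range_succ', pow_zero, mul_one, pow_succ', mul_assoc, mul_comm]

theorem poch_mul_pochInf (b : ℂ⟦X⟧) (K : ℕ) :
    poch b q K * pochInf (b * q ^ K) q = pochInf b q := by
  have hshift : (fun i => 1 - b * q ^ (i + K)) = fun i => 1 - b * q ^ K * q ^ i := by
    funext i; ring
  have := Multipliable.prod_mul_tprod_nat_mul' (f := fun i => 1 - b * q ^ i) (k := K)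
    (hshift ▸ multipliable_one_sub_mul_X_pow (b * q ^ K))
  rwa [hshift] at this

theorem pochInf_eq_one_sub_mul (b : ℂ⟦X⟧) : pochInf b q = (1 - b) * pochInf (b * q) q := by
  simpa [poch] using (poch_mul_pochInf b 1).symm

theorem X_pow_dvd_pochInf_sub_one {b : ℂ⟦X⟧} {k : ℕ} (hb : X ^ k ∣ b) :
    X ^ k ∣ pochInf b q - 1 :=
  X_pow_dvd_tprod_sub_one fun i => by simpa using (hb.mul_right _).neg_right

def tri (m : ℕ) : ℕ := m * (m + 1) / 2

@[simp] theorem tri_zero : tri 0 = 0 := rfl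

theorem tri_succ (m : ℕ) : tri (m + 1) = tri m + (m + 1) := by
  have : (m + 1) * (m + 1 + 1) = m * (m + 1) + 2 * (m + 1) := by ring
  unfold tri; omega

theorem le_tri (m : ℕ) : m ≤ tri m := by
  induction m with
  | zero => simp
  | succ m ih => rw [tri_succ]; omega

section QSeries

variable (a : ℂ)

noncomputable def pochPair (n : ℕ) : ℂ⟦X⟧ :=
  pochInf (q ^ (n + 1)) q * pochInf (C a * q ^ (n + 1)) q

noncomputable def pochPairSum (N : ℕ) : ℂ⟦X⟧ := ∑' n, q ^ (N * n) * pochPair a n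

noncomputable def pochThetaSum (K : ℕ) : ℂ⟦X⟧ :=
  ∑' m, (-C a) ^ m * q ^ tri m * poch (q ^ (m + 1)) q K

noncomputable def eulerSum (j : ℕ) : ℂ⟦X⟧ :=
  ∑' m, (-C a) ^ m * q ^ (j * m + tri m) * pochInf (q ^ (m + 1)) q

theorem pochPair_eq_mul_pochPair_succ (n : ℕ) :
    pochPair a n = (1 - q ^ (n + 1)) * (1 - C a * q ^ (n + 1)) * pochPair a (n + 1) := by
  simp only [pochPair]
  rw [pochInf_eq_one_sub_mul (q ^ (n + 1)), pochInf_eq_one_sub_mul (C a * q ^ (n + 1)),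
    ← pow_succ, mul_assoc (C a), ← pow_succ]
  ring

theorem hasSum_pochPairSum (N : ℕ) :
    HasSum (fun n => q ^ ((N + 1) * n) * pochPair a n) (pochPairSum a (N + 1)) :=
  (summable_of_X_pow_dvd fun n => X_pow_dvd_q_pow_mul (by nlinarith) _).hasSum

theorem hasSum_pochThetaSum (K : ℕ) :
    HasSum (fun m => (-C a) ^ m * q ^ tri m * poch (q ^ (m + 1)) q K) (pochThetaSum a K) :=
  (summable_of_X_pow_dvd fun m =>
    (dvd_mul_of_dvd_right (pow_dvd_pow X (le_tri m)) _).mul_right _).hasSum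

theorem hasSum_eulerSum (j : ℕ) :
    HasSum (fun m => (-C a) ^ m * q ^ (j * m + tri m) * pochInf (q ^ (m + 1)) q)
      (eulerSum a j) :=
  (summable_of_X_pow_dvd fun m =>
    (dvd_mul_of_dvd_right (pow_dvd_pow X (by have := le_tri m; omega)) _).mul_right _).hasSum

theorem q_pow_mul_pochPairSum (K : ℕ) :
    q ^ (K + 1) * pochPairSum a (K + 1) =
      pochPairSum a (K + 1) - (1 + C a) * pochPairSum a (K + 2) +
        C a * pochPairSum a (K + 3) := by
  set t : ℕ → ℂ⟦X⟧ := fun n =>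
    q ^ ((K + 1) * n) * (1 - q ^ n) * (1 - C a * q ^ n) * pochPair a n
  have htel : HasSum (fun n => t n - t (n + 1)) 0 := by
    simpa [t] using hasSum_sub_succ_of_X_pow_dvd (s := t) fun n =>
      by simpa only [t, mul_assoc] using X_pow_dvd_q_pow_mul (by nlinarith) _
  have hsum := (((hasSum_pochPairSum a K).sub
    ((hasSum_pochPairSum a (K + 1)).mul_left (1 + C a))).add
    ((hasSum_pochPairSum a (K + 2)).mul_left (C a))).sub
    ((hasSum_pochPairSum a K).mul_left (q ^ (K + 1)))
  have hterm : ∀ n, q ^ ((K + 1) * n) * pochPair a n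
      - (1 + C a) * (q ^ ((K + 1 + 1) * n) * pochPair a n)
      + C a * (q ^ ((K + 2 + 1) * n) * pochPair a n)
      - q ^ (K + 1) * (q ^ ((K + 1) * n) * pochPair a n) = t n - t (n + 1) := by
    intro n
    simp only [t]
    rw [pochPair_eq_mul_pochPair_succ a n]
    ring
  linear_combination -hsum.unique (htel.congr_fun hterm)

theorem q_pow_mul_pochThetaSum (K : ℕ) :
    q ^ (K + 1) * pochThetaSum a K =
      pochThetaSum a K - (1 + C a) * pochThetaSum a (K + 1) + C a * pochThetaSum a (K + 2) := by
  set t : ℕ → ℂ⟦X⟧ := fun m =>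
    (-C a) ^ m * q ^ (tri m + K + 1) * (1 - q ^ m) * poch (q ^ (m + 1)) q K
  have htel : HasSum (fun n => t n - t (n + 1)) 0 := by
    simpa [t] using hasSum_sub_succ_of_X_pow_dvd (s := t) fun m =>
      ((dvd_mul_of_dvd_right (pow_dvd_pow X (by have := le_tri m; omega)) _).mul_right
        _).mul_right _
  have hsum := (((hasSum_pochThetaSum a K).mul_left (q ^ (K + 1))).sub
    (hasSum_pochThetaSum a K)).add
    (((hasSum_pochThetaSum a (K + 1)).mul_left (1 + C a)).sub
      ((hasSum_pochThetaSum a (K + 2)).mul_left (C a)))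
  have hterm : ∀ m, q ^ (K + 1) * ((-C a) ^ m * q ^ tri m * poch (q ^ (m + 1)) q K)
      - (-C a) ^ m * q ^ tri m * poch (q ^ (m + 1)) q K
      + ((1 + C a) * ((-C a) ^ m * q ^ tri m * poch (q ^ (m + 1)) q (K + 1))
      - C a * ((-C a) ^ m * q ^ tri m * poch (q ^ (m + 1)) q (K + 2))) = t m - t (m + 1) := by
    intro m
    have hshift := poch_succ' (q ^ (m + 1)) K
    rw [← pow_succ, poch_succ] at hshift
    simp only [t]
    rw [poch_succ _ (K + 1), poch_succ, tri_succ]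
    linear_combination (-(-C a) ^ (m + 1) * q ^ (tri m + (m + 1) + K + 1)) * hshift
  linear_combination hsum.unique (htel.congr_fun hterm)

theorem eulerSum_eq_mul_eulerSum_succ (j : ℕ) :
    eulerSum a j = (1 - C a * q ^ (j + 1)) * eulerSum a (j + 1) := by
  have hshift := ((hasSum_nat_add_iff' 1).mpr (hasSum_eulerSum a (j + 1))).sub
    ((hasSum_eulerSum a (j + 1)).mul_left (C a * q ^ (j + 1)))
  have hterm : ∀ m,
      (-C a) ^ (m + 1) * q ^ ((j + 1) * (m + 1) + tri (m + 1)) * pochInf (q ^ (m + 1 + 1)) q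
      - C a * q ^ (j + 1) * ((-C a) ^ m * q ^ ((j + 1) * m + tri m) * pochInf (q ^ (m + 1)) q) =
      (-C a) ^ (m + 1) * q ^ (j * (m + 1) + tri (m + 1)) * pochInf (q ^ (m + 1 + 1)) q := by
    intro m
    rw [pochInf_eq_one_sub_mul (q ^ (m + 1)), ← pow_succ, tri_succ]
    ring
  have := (hasSum_eulerSum a j).unique (hshift.congr_fun fun m => (hterm m).symm).zero_add
  simp only [Finset.sum_range_one, Nat.mul_zero, tri_zero, zero_add] at this
  linear_combination this

theorem pochInf_mul_pochInf_eq_eulerSum (j : ℕ) :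
    pochInf q q * pochInf (C a * q ^ (j + 1)) q = eulerSum a j := by
  set D : ℕ → ℂ⟦X⟧ := fun j => pochInf q q * pochInf (C a * q ^ (j + 1)) q - eulerSum a j
  have hD : ∀ j, D j = D (j + 1) - q ^ (j + 1) * (C a * D (j + 1)) := by
    intro j
    simp only [D]
    rw [eulerSum_eq_mul_eulerSum_succ a j, pochInf_eq_one_sub_mul (C a * q ^ (j + 1)), mul_assoc,
      ← pow_succ]
    ring
  have base : ∀ j, X ^ (j + 1) ∣ D j := by
    intro j
    have hprod := X_pow_dvd_pochInf_sub_one (k := j + 1) (dvd_mul_of_dvd_right dvd_rfl (C a))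
    have htail := (hasSum_nat_add_iff' 1).mpr (hasSum_eulerSum a j)
    simp only [Finset.sum_range_one, pow_zero, one_mul, Nat.mul_zero, tri_zero, zero_add, pow_one]
      at htail
    have hsum : X ^ (j + 1) ∣ eulerSum a j - pochInf q q := X_pow_dvd_of_hasSum htail fun m =>
      (dvd_mul_of_dvd_right (pow_dvd_pow X (by have := le_tri (m + 1); nlinarith)) _).mul_right _
    rw [show D j = pochInf q q * (pochInf (C a * q ^ (j + 1)) q - 1) -
      (eulerSum a j - pochInf q q) by simp only [D]; ring]
    exact dvd_sub (hprod.mul_left _) hsum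
  refine sub_eq_zero.mp (eq_zero_of_X_pow_dvd_of_step base (fun e K hall hgt => ?_) j)
  rw [hD K]
  exact dvd_sub (hgt _ K.lt_succ_self) (X_pow_succ_dvd_q_pow_succ_mul ((hall _).mul_left _) K)

theorem pochPairSum_eq_pochThetaSum (K : ℕ) : pochPairSum a (K + 1) = pochThetaSum a K := by
  set D : ℕ → ℂ⟦X⟧ := fun K => pochPairSum a (K + 1) - pochThetaSum a K
  have hD : ∀ K, D K = q ^ (K + 1) * D K + (1 + C a) * D (K + 1) - C a * D (K + 2) := by
    intro K
    simp only [D]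
    linear_combination q_pow_mul_pochThetaSum a K - q_pow_mul_pochPairSum a K
  have base : ∀ K, X ^ (K + 1) ∣ D K := by
    intro K
    have hpair := (hasSum_nat_add_iff' 1).mpr (hasSum_pochPairSum a K)
    simp only [Finset.sum_range_one, Nat.mul_zero, pow_zero, one_mul] at hpair
    have hpair' : X ^ (K + 1) ∣ pochPairSum a (K + 1) - pochPair a 0 :=
      X_pow_dvd_of_hasSum hpair fun n => X_pow_dvd_q_pow_mul (by nlinarith) _
    have htheta : X ^ (K + 1) ∣ pochThetaSum a K - eulerSum a 0 :=
      X_pow_dvd_of_hasSum ((hasSum_pochThetaSum a K).sub (hasSum_eulerSum a 0)) fun m => by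
        have htail := X_pow_dvd_pochInf_sub_one (k := K + 1) (b := q ^ (m + 1) * q ^ K)
          (by rw [← pow_add]; exact pow_dvd_pow X (by omega))
        rw [Nat.zero_mul, zero_add, ← poch_mul_pochInf (q ^ (m + 1)) K]
        convert htail.mul_left (-((-C a) ^ m * q ^ tri m * poch (q ^ (m + 1)) q K)) using 1
        ring
    rw [show D K = (pochPairSum a (K + 1) - pochPair a 0) - (pochThetaSum a K - eulerSum a 0) by
      simp only [D, ← pochInf_mul_pochInf_eq_eulerSum a 0, pochPair, zero_add, pow_one]; ring]
    exact dvd_sub hpair' htheta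
  refine sub_eq_zero.mp (eq_zero_of_X_pow_dvd_of_step base (fun e K hall hgt => ?_) K)
  rw [hD K]
  exact dvd_sub (dvd_add (X_pow_succ_dvd_q_pow_succ_mul (hall K) K)
    ((hgt _ K.lt_succ_self).mul_left _)) ((hgt _ (by omega)).mul_left _)

end QSeries

theorem chi3_add_two (m : ℕ) : chi3 (m + 2) = -(chi3 (m + 1) + chi3 m) := by
  unfold chi3; split_ifs <;> first | omega | norm_num

namespace IsPrimitiveRoot

theorem pow_add_two_of_three {ζ : ℂ} (hζ : IsPrimitiveRoot ζ 3) (m : ℕ) :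
    ζ ^ (m + 2) = -(ζ ^ (m + 1) + ζ ^ m) := by
  have := hζ.geom_sum_eq_zero (by norm_num)
  simp only [Finset.sum_range_succ, Finset.sum_range_zero] at this
  linear_combination ζ ^ m * this

theorem pow_add_inv_pow_eq_chi3 {ζ : ℂ} (hζ : IsPrimitiveRoot ζ 3) (m : ℕ) :
    ζ ^ m + ζ⁻¹ ^ m = chi3 m := by
  induction m using Nat.twoStepInduction with
  | zero => norm_num [chi3]
  | one =>
    have hinv : ζ⁻¹ = ζ ^ 2 :=
      inv_eq_of_mul_eq_one_right (by rw [← pow_succ']; exact hζ.pow_eq_one)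
    rw [pow_one, pow_one, hinv]
    norm_num [chi3]
    linear_combination hζ.pow_add_two_of_three 0
  | more m ih ih' =>
    rw [hζ.pow_add_two_of_three, hζ.inv.pow_add_two_of_three, chi3_add_two, ← ih, ← ih']
    ring

theorem pochThetaSum_two_add_inv {ζ : ℂ} (hζ : IsPrimitiveRoot ζ 3) :
    pochThetaSum ζ 2 + pochThetaSum ζ⁻¹ 2 =
      2 - q - 2 * q ^ 2 +
        ∑' k : ℕ, (-1 : ℂ⟦X⟧) ^ (k + 2) * C (chi3 (k + 1)) * q ^ ((k + 2) * (k + 3) / 2 + 1) := by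
  -- the `m`-th term of the sum is `s m - s (m + 1) + r m`, by `chi3_add_two`
  set s : ℕ → ℂ⟦X⟧ := fun m =>
    (-1) ^ m * q ^ tri m * (C (chi3 m) - C (chi3 (m + 1) + chi3 m) * q ^ (m + 1))
  set r : ℕ → ℂ⟦X⟧ := fun m => (-1) ^ (m + 1) * C (chi3 m) * q ^ (tri (m + 1) + 1)
  have hsum : HasSum (fun m => (-1) ^ m * C (chi3 m) * q ^ tri m * poch (q ^ (m + 1)) q 2)
      (pochThetaSum ζ 2 + pochThetaSum ζ⁻¹ 2) :=
    ((hasSum_pochThetaSum ζ 2).add (hasSum_pochThetaSum ζ⁻¹ 2)).congr_fun fun m => by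
      rw [← hζ.pow_add_inv_pow_eq_chi3 m, neg_pow, neg_pow, map_add, map_pow, map_pow]
      ring
  have hterm : ∀ m, s m - s (m + 1) + r m =
      (-1) ^ m * C (chi3 m) * q ^ tri m * poch (q ^ (m + 1)) q 2 := by
    intro m
    simp only [s, r, poch, Finset.prod_range_succ, Finset.prod_range_zero, tri_succ, chi3_add_two,
      map_neg, map_add]
    ring
  have htel : HasSum (fun m => s m - s (m + 1)) (s 0) :=
    hasSum_sub_succ_of_X_pow_dvd fun m =>
      (dvd_mul_of_dvd_right (pow_dvd_pow X (le_tri m)) _).mul_right _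
  have hr : HasSum r (r 0 + ∑' k : ℕ, (-1 : ℂ⟦X⟧) ^ (k + 2) * C (chi3 (k + 1)) *
      q ^ ((k + 2) * (k + 3) / 2 + 1)) :=
    HasSum.zero_add (summable_of_X_pow_dvd fun k =>
      dvd_mul_of_dvd_right (pow_dvd_pow X (by have := le_tri (k + 1 + 1); omega)) _).hasSum
  have hC2 : C (2 : ℂ) = 2 := map_ofNat C 2
  have hs0 : s 0 = 2 - q := by norm_num [s, chi3, tri, hC2]
  have hr0 : r 0 = -(2 * q ^ 2) := by norm_num [r, chi3, tri, hC2]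
  rw [hsum.unique ((htel.add hr).congr_fun fun m => (hterm m).symm), hs0, hr0]
  ring

end IsPrimitiveRoot

/-- Theorem 1.5: `ε₃(q) = ∑_{n≥0} q^{3n}(q^{n+1};q)_∞ [(ωq^{n+1};q)_∞ + (ω⁻¹q^{n+1};q)_∞]
= 2 - q - 2q² + ∑_{n≥2} (-1)ⁿ χ₃(n-1) q^{n(n+1)/2 + 1}` (summing over `n = k + 2`). -/
theorem eps3_eval :
    (∑' n : ℕ, q ^ (3 * n) * pochInf (q ^ (n + 1)) q *
      (pochInf (PowerSeries.C (R := ℂ) (Complex.exp (2 * Real.pi * Complex.I / 3)) * q ^ (n + 1)) q +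
       pochInf (PowerSeries.C (R := ℂ) (Complex.exp (2 * Real.pi * Complex.I / 3))⁻¹ * q ^ (n + 1)) q)) =
    2 - q - 2 * q ^ 2 +
      ∑' k : ℕ, (-1 : PowerSeries ℂ) ^ (k + 2) * PowerSeries.C (R := ℂ) (chi3 (k + 1)) *
        q ^ ((k + 2) * (k + 3) / 2 + 1) := by
  set ω := Complex.exp (2 * Real.pi * Complex.I / 3)
  have hω : IsPrimitiveRoot ω 3 := by simpa using Complex.isPrimitiveRoot_exp 3 (by norm_num)
  have hsplit := ((hasSum_pochPairSum ω 2).add (hasSum_pochPairSum ω⁻¹ 2)).congr_fun fun n =>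
    show q ^ (3 * n) * pochInf (q ^ (n + 1)) q *
        (pochInf (C ω * q ^ (n + 1)) q + pochInf (C ω⁻¹ * q ^ (n + 1)) q) = _ by
      simp only [pochPair]; ring
  rw [hsplit.tsum_eq, pochPairSum_eq_pochThetaSum, pochPairSum_eq_pochThetaSum,
    hω.pochThetaSum_two_add_inv]
end

section
/- For all integers m ≥ 2 and N ≥ 1, the finite q-series identity holds: 1 + ∑_{n=1}^{N} ∑_{j=1}^{m-1} q^{mn−j} / [ (∏_{r=1}^{m−j} (q^r; q^m)_n) · (∏_{r=m−j+1}^{m−1} (q^r; q^m)_{n−1}) ] = (q^m; q^m)_N / (q; q)_{mN}. -/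
open PowerSeries

/-!
Write `A n = ∏_{r=1}^{m-1} (q^r; q^m)_n⁻¹` (`glaisherProduct q m n`). Putting `x r = q^(r + m n)`
and `k = m - j`, the `j`-th summand of level `n + 1` is `A n · x k / ∏_{r ≤ k} (1 - x r)`, and
these telescope in `k` to `A n · (∏_{r < m} (1 - x r)⁻¹ - 1) = A (n + 1) - A n`. Hence the double
sum telescopes to `A N - 1`, and `(q; q)_{mN} = ∏_{r=1}^{m} (q^r; q^m)_N` identifies `A N` with
the right-hand side.

The computation is done in an arbitrary field, for an element that is not a root of unity, and
transported to `ℂ⟦q⟧` through the embedding into Laurent series, which turns the power-series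
inverses (junk `0` for series without constant term) into field inverses.
-/

open Finset

def qPoch {R : Type*} [CommRing R] (a b : R) (n : ℕ) : R :=
  ∏ i ∈ range n, (1 - a * b ^ i)

theorem poch_eq_qPoch : poch = qPoch := rfl

section CommRing

variable {R S : Type*} [CommRing R] [CommRing S]

theorem qPoch_succ (a b : R) (n : ℕ) : qPoch a b (n + 1) = qPoch a b n * (1 - a * b ^ n) :=
  prod_range_succ _ _

theorem qPoch_add (a b : R) (n k : ℕ) :
    qPoch a b (n + k) = qPoch a b n * ∏ i ∈ range k, (1 - a * b ^ (n + i)) :=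
  prod_range_add _ _ _

theorem qPoch_zero_left (b : R) (n : ℕ) : qPoch 0 b n = 1 := by
  simp [qPoch]

theorem map_qPoch (f : R →+* S) (a b : R) (n : ℕ) : f (qPoch a b n) = qPoch (f a) (f b) n := by
  simp [qPoch, map_prod]

theorem qPoch_mul (a b : R) (m N : ℕ) :
    qPoch a b (m * N) = ∏ r ∈ range m, qPoch (a * b ^ r) (b ^ m) N := by
  induction N with
  | zero => simp [qPoch]
  | succ N ih =>
    rw [Nat.mul_succ, qPoch_add, ih]
    simp only [qPoch_succ, prod_mul_distrib]
    exact congrArg _ (prod_congr rfl fun r _ => by ring)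

end CommRing

theorem sum_Icc_one_sub_reflect {M : Type*} [AddCommMonoid M] (f : ℕ → M) (m : ℕ) :
    ∑ j ∈ Icc 1 (m - 1), f (m - j) = ∑ j ∈ Icc 1 (m - 1), f j :=
  sum_nbij' (m - ·) (m - ·) (fun j hj => by simp at hj ⊢; omega)
    (fun j hj => by simp at hj ⊢; omega) (fun j hj => by simp at hj; omega) (fun j hj => by simp at hj; omega) fun _ _ => rfl

theorem prod_Icc_one_mul_prod_Icc {M : Type*} [CommMonoid M] (f : ℕ → M) {a b : ℕ} (hab : a ≤ b) :
    (∏ r ∈ Icc 1 a, f r) * ∏ r ∈ Icc (a + 1) b, f r = ∏ r ∈ Icc 1 b, f r := by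
  have := prod_Ioc_consecutive f (Nat.zero_le a) hab
  simpa only [← Icc_add_one_left_eq_Ioc, zero_add] using this

section Field

variable {K : Type*} [Field K]

theorem sum_Icc_mul_inv_prod_one_sub (x : ℕ → K) (M : ℕ) (hx : ∀ i ∈ Icc 1 M, 1 - x i ≠ 0) :
    ∑ k ∈ Icc 1 M, x k * (∏ r ∈ Icc 1 k, (1 - x r))⁻¹ = (∏ r ∈ Icc 1 M, (1 - x r))⁻¹ - 1 := by
  induction M with
  | zero => simp
  | succ M ih =>
    have hP : ∏ r ∈ Icc 1 M, (1 - x r) ≠ 0 :=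
      prod_ne_zero_iff.2 fun i hi => hx i (by simp at hi ⊢; omega)
    have h1 : 1 - x (M + 1) ≠ 0 := hx (M + 1) (by simp)
    rw [sum_Icc_succ_top (by omega), ih fun i hi => hx i (by simp at hi ⊢; omega),
      prod_Icc_succ_top (by omega)]
    field_simp
    ring

variable {Q : K}

theorem one_sub_pow_ne_zero (hQ : ¬IsOfFinOrder Q) {s : ℕ} (hs : s ≠ 0) : 1 - Q ^ s ≠ 0 :=
  fun h => hQ (isOfFinOrder_iff_pow_eq_one.2 ⟨s, Nat.pos_of_ne_zero hs, (sub_eq_zero.1 h).symm⟩)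

theorem qPoch_pow_ne_zero (hQ : ¬IsOfFinOrder Q) {r : ℕ} (hr : r ≠ 0) (m n : ℕ) :
    qPoch (Q ^ r) (Q ^ m) n ≠ 0 :=
  prod_ne_zero_iff.2 fun i _ => by
    rw [← pow_mul, ← pow_add]
    exact one_sub_pow_ne_zero hQ (by omega)

def glaisherProduct (Q : K) (m n : ℕ) : K :=
  (∏ r ∈ Icc 1 (m - 1), qPoch (Q ^ r) (Q ^ m) n)⁻¹

theorem glaisherProduct_zero (Q : K) (m : ℕ) : glaisherProduct Q m 0 = 1 := by
  simp [glaisherProduct, qPoch]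

theorem glaisherProduct_succ (Q : K) (m n : ℕ) :
    glaisherProduct Q m (n + 1) =
      glaisherProduct Q m n * (∏ r ∈ Icc 1 (m - 1), (1 - Q ^ (r + m * n)))⁻¹ := by
  simp only [glaisherProduct, qPoch_succ, prod_mul_distrib, mul_inv, ← pow_mul, ← pow_add]

theorem glaisherProduct_eq (hQ : ¬IsOfFinOrder Q) {m : ℕ} (hm : m ≠ 0) (N : ℕ) :
    glaisherProduct Q m N = qPoch (Q ^ m) (Q ^ m) N * (qPoch Q Q (m * N))⁻¹ := by
  have hsplit : qPoch Q Q (m * N) =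
      (∏ r ∈ Icc 1 (m - 1), qPoch (Q ^ r) (Q ^ m) N) * qPoch (Q ^ m) (Q ^ m) N := by
    obtain ⟨k, rfl⟩ := Nat.exists_eq_succ_of_ne_zero hm
    simp only [qPoch_mul, ← pow_succ', prod_range_succ, Nat.succ_sub_one]
    rw [range_eq_Ico, prod_Ico_add' (fun r => qPoch (Q ^ r) (Q ^ (k + 1)) N), zero_add,
      Ico_add_one_right_eq_Icc]
  rw [hsplit, mul_inv, mul_left_comm, mul_inv_cancel₀ (qPoch_pow_ne_zero hQ hm m N), mul_one,
    glaisherProduct]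

theorem glaisher_term_eq (Q : K) {m j : ℕ} (hj : j ∈ Icc 1 (m - 1)) (n : ℕ) :
    Q ^ (m * (n + 1) - j) * (∏ r ∈ Icc 1 (m - j), qPoch (Q ^ r) (Q ^ m) (n + 1))⁻¹ *
        (∏ r ∈ Icc (m - j + 1) (m - 1), qPoch (Q ^ r) (Q ^ m) n)⁻¹ =
      glaisherProduct Q m n *
        (Q ^ (m - j + m * n) * (∏ r ∈ Icc 1 (m - j), (1 - Q ^ (r + m * n)))⁻¹) := by
  obtain ⟨hj1, hjm⟩ := mem_Icc.1 hj
  have hexp : m * (n + 1) - j = m - j + m * n := by rw [Nat.mul_succ]; omega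
  rw [glaisherProduct, ← prod_Icc_one_mul_prod_Icc _ (by omega : m - j ≤ m - 1), hexp]
  simp only [qPoch_succ, prod_mul_distrib, mul_inv, ← pow_mul, ← pow_add]
  ring

theorem sum_glaisher_terms (hQ : ¬IsOfFinOrder Q) (m n : ℕ) :
    ∑ j ∈ Icc 1 (m - 1), Q ^ (m * (n + 1) - j) *
        (∏ r ∈ Icc 1 (m - j), qPoch (Q ^ r) (Q ^ m) (n + 1))⁻¹ *
        (∏ r ∈ Icc (m - j + 1) (m - 1), qPoch (Q ^ r) (Q ^ m) n)⁻¹ =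
      glaisherProduct Q m (n + 1) - glaisherProduct Q m n := by
  have hx : ∀ i ∈ Icc 1 (m - 1), 1 - Q ^ (i + m * n) ≠ 0 := fun i hi =>
    one_sub_pow_ne_zero hQ (by simp at hi; omega)
  rw [sum_congr rfl fun j hj => glaisher_term_eq Q hj n, ← mul_sum,
    sum_Icc_one_sub_reflect (fun k => Q ^ (k + m * n) * (∏ r ∈ Icc 1 k, (1 - Q ^ (r + m * n)))⁻¹),
    sum_Icc_mul_inv_prod_one_sub (fun k => Q ^ (k + m * n)) _ hx, glaisherProduct_succ]
  ring

theorem one_add_sum_glaisher_terms (hQ : ¬IsOfFinOrder Q) (m N : ℕ) :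
    1 + ∑ n ∈ Icc 1 N, ∑ j ∈ Icc 1 (m - 1), Q ^ (m * n - j) *
        (∏ r ∈ Icc 1 (m - j), qPoch (Q ^ r) (Q ^ m) n)⁻¹ *
        (∏ r ∈ Icc (m - j + 1) (m - 1), qPoch (Q ^ r) (Q ^ m) (n - 1))⁻¹ =
      glaisherProduct Q m N := by
  induction N with
  | zero => simp [glaisherProduct_zero]
  | succ N ih =>
    rw [sum_Icc_succ_top (by omega), ← add_assoc, ih, Nat.add_sub_cancel, sum_glaisher_terms hQ]
    ring

end Field

section PowerSeries

open HahnSeries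

variable {k : Type*} [Field k]

theorem ofPowerSeries_inv {f : PowerSeries k} (hf : constantCoeff f ≠ 0) :
    ofPowerSeries ℤ k f⁻¹ = (ofPowerSeries ℤ k f)⁻¹ :=
  eq_inv_of_mul_eq_one_left (by rw [← map_mul, PowerSeries.inv_mul_cancel _ hf, map_one])

theorem PowerSeries.not_isOfFinOrder_X : ¬IsOfFinOrder (X : PowerSeries k) := fun h => by
  obtain ⟨n, hn, hXn⟩ := isOfFinOrder_iff_pow_eq_one.1 h
  simpa [hn.ne'] using congrArg constantCoeff hXn

theorem not_isOfFinOrder_ofPowerSeries_X : ¬IsOfFinOrder (ofPowerSeries ℤ k X) :=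
  (ofPowerSeries_injective (Γ := ℤ) (R := k)).isOfFinOrder_iff
    (f := (ofPowerSeries ℤ k : PowerSeries k →* LaurentSeries k)) |>.not.2
    PowerSeries.not_isOfFinOrder_X

theorem ofPowerSeries_poch (a b : PowerSeries ℂ) (n : ℕ) :
    ofPowerSeries ℤ ℂ (poch a b n) = qPoch (ofPowerSeries ℤ ℂ a) (ofPowerSeries ℤ ℂ b) n := by
  rw [poch_eq_qPoch, map_qPoch]

theorem constantCoeff_poch {a : PowerSeries ℂ} (ha : constantCoeff a = 0) (b : PowerSeries ℂ)
    (n : ℕ) : constantCoeff (poch a b n) = 1 := by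
  rw [poch_eq_qPoch, map_qPoch, ha, qPoch_zero_left]

theorem ofPowerSeries_inv_poch {a : PowerSeries ℂ} (ha : constantCoeff a = 0)
    (b : PowerSeries ℂ) (n : ℕ) :
    ofPowerSeries ℤ ℂ (poch a b n)⁻¹ = (qPoch (ofPowerSeries ℤ ℂ a) (ofPowerSeries ℤ ℂ b) n)⁻¹ := by
  rw [ofPowerSeries_inv (by simp [constantCoeff_poch ha]), ofPowerSeries_poch]

theorem ofPowerSeries_inv_prod_poch {s : Finset ℕ} (hs : 0 ∉ s) (b : PowerSeries ℂ) (n : ℕ) :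
    ofPowerSeries ℤ ℂ (∏ r ∈ s, poch (q ^ r) b n)⁻¹ =
      (∏ r ∈ s, qPoch (ofPowerSeries ℤ ℂ q ^ r) (ofPowerSeries ℤ ℂ b) n)⁻¹ := by
  have hq : ∀ r ∈ s, constantCoeff (q ^ r) = 0 := fun r hr => by
    simp [q, ne_of_mem_of_not_mem hr hs]
  rw [ofPowerSeries_inv, map_prod]
  · simp only [ofPowerSeries_poch, map_pow]
  · rw [map_prod, prod_eq_one fun r hr => constantCoeff_poch (hq r hr) b n]
    exact one_ne_zero

end PowerSeries

theorem finite_glaisher_series_general (m N : ℕ) (hm : 2 ≤ m) :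
    1 + ∑ n ∈ Finset.Icc 1 N, ∑ j ∈ Finset.Icc 1 (m - 1),
        q ^ (m * n - j) *
          (∏ r ∈ Finset.Icc 1 (m - j), poch (q ^ r) (q ^ m) n)⁻¹ *
          (∏ r ∈ Finset.Icc (m - j + 1) (m - 1), poch (q ^ r) (q ^ m) (n - 1))⁻¹ =
      poch (q ^ m) (q ^ m) N * (poch q q (m * N))⁻¹ := by
  have hQ : ¬IsOfFinOrder (HahnSeries.ofPowerSeries ℤ ℂ q) := not_isOfFinOrder_ofPowerSeries_X
  apply HahnSeries.ofPowerSeries_injective (Γ := ℤ)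
  simp (disch := simp [q]) only [map_add, map_one, map_sum, map_mul, map_pow, ofPowerSeries_poch,
    ofPowerSeries_inv_poch, ofPowerSeries_inv_prod_poch]
  rw [one_add_sum_glaisher_terms hQ, glaisherProduct_eq hQ (by omega)]

/-- Theorem 1.9: the finite q-series identity
`1 + ∑_{n=1}^{N} ∑_{j=1}^{m-1} q^{mn-j} / [(∏_{r=1}^{m-j}(q^r;q^m)_n)(∏_{r=m-j+1}^{m-1}(q^r;q^m)_{n-1})]
= (q^m;q^m)_N / (q;q)_{mN}`. -/
theorem finite_glaisher_series (m N : ℕ) (hm : 2 ≤ m) (hN : 1 ≤ N) :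
    1 + ∑ n ∈ Finset.Icc 1 N, ∑ j ∈ Finset.Icc 1 (m - 1),
        q ^ (m * n - j) *
          (∏ r ∈ Finset.Icc 1 (m - j), poch (q ^ r) (q ^ m) n)⁻¹ *
          (∏ r ∈ Finset.Icc (m - j + 1) (m - 1), poch (q ^ r) (q ^ m) (n - 1))⁻¹ =
      poch (q ^ m) (q ^ m) N * (poch q q (m * N))⁻¹ :=
  finite_glaisher_series_general m N hm
end

section
/- For every integer m ≥ 2, the coefficient E_m(n) of q^n in ε_m(q) = ∑_{k≥0} (−1)^k χ_m(k) q^{k(k+1)/2} (q^{k+1}; q)_{m−1} is zero for all n outside a set of density zero; specifically the number of n < x with E_m(n) ≠ 0 is at most (2^{m−1} − m)(√(2x) + 1) plus a constant depending only on m. -/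
open PowerSeries

/-- `χₘ(k) = m - 1` if `m ∣ k`, and `-1` otherwise. -/
noncomputable def chim (m k : ℕ) : ℂ := if m ∣ k then (m : ℂ) - 1 else -1

/-- `Em m n` is the coefficient of `qⁿ` in
`εₘ(q) = ∑_{k≥0} (-1)ᵏ χₘ(k) q^{k(k+1)/2} (q^{k+1};q)_{m-1}`. -/
noncomputable def Em (m n : ℕ) : ℂ :=
  PowerSeries.coeff n
    (∑' k : ℕ, (-1 : PowerSeries ℂ) ^ k * PowerSeries.C (chim m k) *
      q ^ (k * (k + 1) / 2) * poch (q ^ (k + 1)) q (m - 1))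

/-!
Expanding the q-Pochhammer symbol, the `k`-th summand of `εₘ` is a sum over `S ⊆ {0, …, m-2}` of
`±χₘ(k) q^{T_k + ∑_{i ∈ S} (k+1+i)}`, where `T_k = k(k+1)/2`. For an initial segment
`S = {0, …, j-1}` the exponent is `T_{k+j}`, so all terms with `k + j = N` land on `q^{T_N}` with
the common sign `(-1)^N`; once `N ≥ m - 1` they carry the values of `χₘ` at `m` consecutive
integers, which sum to zero. A nonzero coefficient therefore sits at some `T_N` with `N < m - 1`
or at an exponent coming from one of the `2^{m-1} - m` other subsets `S`, and below `x` each such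
`S` yields at most `√(2x) + 1` exponents, since `T_k < x` forces `k ≤ √(2x)`.
-/

open Finset

def triangle (k : ℕ) : ℕ := k * (k + 1) / 2

lemma two_mul_triangle (k : ℕ) : 2 * triangle k = k * (k + 1) :=
  Nat.mul_div_cancel' (Nat.even_mul_succ_self k).two_dvd

lemma triangle_succ (k : ℕ) : triangle (k + 1) = triangle k + (k + 1) := by
  have h := two_mul_triangle (k + 1)
  have h' := two_mul_triangle k
  nlinarith

lemma triangle_strictMono : StrictMono triangle :=
  strictMono_nat_of_lt_succ fun k => by rw [triangle_succ]; omega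

lemma self_le_triangle (k : ℕ) : k ≤ triangle k := by
  have := two_mul_triangle k
  nlinarith

lemma le_sqrt_two_mul_of_triangle_le {k x : ℕ} (h : triangle k ≤ x) : k ≤ Nat.sqrt (2 * x) :=
  Nat.le_sqrt.2 <| by nlinarith [two_mul_triangle k]

def termExponent (k : ℕ) (S : Finset ℕ) : ℕ := triangle k + ∑ i ∈ S, (k + 1 + i)

lemma triangle_le_termExponent (k : ℕ) (S : Finset ℕ) : triangle k ≤ termExponent k S :=
  Nat.le_add_right _ _

lemma termExponent_range (k j : ℕ) : termExponent k (range j) = triangle (k + j) := by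
  induction j with
  | zero => simp [termExponent]
  | succ j ih =>
    rw [← add_assoc, triangle_succ, ← ih, termExponent, termExponent, sum_range_succ]
    ring

def prefixes (t : ℕ) : Finset (Finset ℕ) := (range (t + 1)).image range

def nonPrefixes (t : ℕ) : Finset (Finset ℕ) := (range t).powerset \ prefixes t

lemma prefixes_subset_powerset (t : ℕ) : prefixes t ⊆ (range t).powerset := by
  simp only [prefixes, image_subset_iff, mem_range, mem_powerset]
  exact fun j hj => range_subset_range.2 (by omega)

lemma range_injective : Function.Injective range :=
  fun a b h => by simpa using congrArg card h

lemma card_nonPrefixes (t : ℕ) : #(nonPrefixes t) = 2 ^ t - (t + 1) := by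
  rw [nonPrefixes, card_sdiff_of_subset (prefixes_subset_powerset t), card_powerset, card_range,
    prefixes, card_image_of_injective _ range_injective, card_range]

lemma poch_X_pow_eq_sum (a t : ℕ) :
    poch (X ^ a) X t = ∑ S ∈ (range t).powerset, (-1) ^ #S * X ^ (∑ i ∈ S, (a + i)) := by
  simp only [poch, ← pow_add, prod_sub (fun _ => (1 : ℂ⟦X⟧)), prod_const_one, mul_one,
    prod_pow_eq_pow_sum]

open WithPiTopology in
lemma coeff_tsum_eq_sum_range {R : Type*} [Semiring R] [TopologicalSpace R] [T2Space R]
    {f : ℕ → R⟦X⟧} (hf : ∀ k n, n < k → coeff n (f k) = 0) (n : ℕ) :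
    coeff n (∑' k, f k) = ∑ k ∈ range (n + 1), coeff n (f k) := by
  have hvanish (d k : ℕ) (hk : k ∉ range (d + 1)) : coeff d (f k) = 0 :=
    hf k d (by simpa using hk)
  have hsum : Summable f := (summable_iff_summable_coeff R).2 fun d =>
    summable_of_ne_finset_zero (hvanish d)
  rw [← ((hasSum_iff_hasSum_coeff R).1 hsum.hasSum n).tsum_eq, tsum_eq_sum (hvanish n)]

noncomputable def EmTerm (m k : ℕ) : ℂ⟦X⟧ :=
  (-1 : ℂ⟦X⟧) ^ k * C (chim m k) * q ^ triangle k * poch (q ^ (k + 1)) q (m - 1)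

lemma EmTerm_eq_sum (m k : ℕ) :
    EmTerm m k = ∑ S ∈ (range (m - 1)).powerset,
      C ((-1) ^ (k + #S) * chim m k) * X ^ termExponent k S := by
  rw [EmTerm, q, poch_X_pow_eq_sum, mul_sum]
  refine sum_congr rfl fun S _ => ?_
  simp only [termExponent, pow_add, map_mul, map_pow, map_neg, map_one]
  ring

lemma coeff_EmTerm (m k n : ℕ) :
    coeff n (EmTerm m k) = ∑ S ∈ (range (m - 1)).powerset,
      if termExponent k S = n then (-1) ^ (k + #S) * chim m k else 0 := by
  simp only [EmTerm_eq_sum, map_sum, coeff_C_mul_X_pow, eq_comm]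

lemma coeff_EmTerm_of_lt (m : ℕ) {k n : ℕ} (h : n < k) : coeff n (EmTerm m k) = 0 := by
  refine (coeff_EmTerm m k n).trans (sum_eq_zero fun S _ => if_neg ?_)
  have := (self_le_triangle k).trans (triangle_le_termExponent k S)
  omega

lemma Em_eq_sum (m n : ℕ) :
    Em m n = ∑ S ∈ (range (m - 1)).powerset, ∑ k ∈ range (n + 1),
      if termExponent k S = n then (-1) ^ (k + #S) * chim m k else 0 := by
  refine (coeff_tsum_eq_sum_range (fun _ _ => coeff_EmTerm_of_lt m) n).trans ?_
  simp only [coeff_EmTerm, sum_comm (s := range (n + 1))]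

lemma sum_range_chim_sub_eq_zero {m N : ℕ} (hN : m - 1 ≤ N) :
    ∑ j ∈ range m, chim m (N - j) = 0 := by
  rcases Nat.eq_zero_or_pos m with rfl | hm
  · simp
  have hmul : ∀ j ∈ range m, m ∣ N - j ↔ j = N % m := by
    intro j hj
    rw [mem_range] at hj
    rw [← Nat.modEq_iff_dvd' (by omega), Nat.ModEq, Nat.mod_eq_of_lt hj]
  have hchim : ∀ j ∈ range m, chim m (N - j) = (if j = N % m then (m : ℂ) else 0) - 1 := by
    intro j hj
    simp only [chim, hmul j hj]
    split_ifs <;> ring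
  rw [sum_congr rfl hchim, sum_sub_distrib, sum_ite_eq', if_pos (mem_range.2 (Nat.mod_lt N hm))]
  simp

lemma Em_eq_zero {m n : ℕ} (hm : m ≠ 0) (htri : ∀ N < m - 1, triangle N ≠ n)
    (hnon : ∀ k, ∀ S ∈ nonPrefixes (m - 1), termExponent k S ≠ n) : Em m n = 0 := by
  have hprefix : Em m n = ∑ j ∈ range m, ∑ k ∈ range (n + 1),
      if triangle (k + j) = n then (-1) ^ (k + j) * chim m k else 0 := by
    rw [Em_eq_sum, ← sum_subset (prefixes_subset_powerset _), prefixes,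
      sum_image range_injective.injOn, Nat.sub_add_cancel (Nat.one_le_iff_ne_zero.2 hm)]
    · simp only [termExponent_range, card_range]
    · intro S hS hS'
      exact sum_eq_zero fun k _ => if_neg (hnon k S (mem_sdiff.2 ⟨hS, hS'⟩))
  by_cases hn : ∃ N, triangle N = n
  · obtain ⟨N, rfl⟩ := hn
    have hN : m - 1 ≤ N := by
      by_contra h
      exact htri N (by omega) rfl
    have hinner : ∀ j ∈ range m, (∑ k ∈ range (triangle N + 1),
        if triangle (k + j) = triangle N then (-1) ^ (k + j) * chim m k else 0) =
        (-1) ^ N * chim m (N - j) := by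
      intro j hj
      have hjN : j ≤ N := by rw [mem_range] at hj; omega
      have hiff (k : ℕ) : triangle (k + j) = triangle N ↔ k = N - j :=
        triangle_strictMono.injective.eq_iff.trans (by omega)
      simp only [hiff]
      rw [sum_ite_eq', if_pos, Nat.sub_add_cancel hjN]
      have := self_le_triangle N
      rw [mem_range]
      omega
    rw [hprefix, sum_congr rfl hinner, ← mul_sum, sum_range_chim_sub_eq_zero hN, mul_zero]
  · rw [hprefix]
    exact sum_eq_zero fun j _ => sum_eq_zero fun k _ => if_neg (not_exists.1 hn _)

def exceptionalExponents (m x : ℕ) : Finset ℕ :=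
  (range (m - 1)).image triangle ∪
    (range (Nat.sqrt (2 * x) + 1) ×ˢ nonPrefixes (m - 1)).image fun p => termExponent p.1 p.2

lemma mem_exceptionalExponents {m x n : ℕ} (hm : m ≠ 0) (hnx : n < x) (hEm : Em m n ≠ 0) :
    n ∈ exceptionalExponents m x := by
  by_contra hn
  refine hEm (Em_eq_zero hm (fun N hN hNn => hn ?_) fun k S hS hkS => hn ?_)
  · exact mem_union_left _ (mem_image.2 ⟨N, mem_range.2 hN, hNn⟩)
  · have hk : k ≤ Nat.sqrt (2 * x) :=
      le_sqrt_two_mul_of_triangle_le (by have := triangle_le_termExponent k S; omega)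
    exact mem_union_right _
      (mem_image.2 ⟨(k, S), mem_product.2 ⟨mem_range.2 (Nat.lt_succ_of_le hk), hS⟩, hkS⟩)

lemma card_exceptionalExponents_le (m x : ℕ) :
    #(exceptionalExponents m x) ≤ (m - 1) + (Nat.sqrt (2 * x) + 1) * (2 ^ (m - 1) - m) := by
  refine (card_union_le _ _).trans (add_le_add ?_ ?_)
  · exact card_image_le.trans (card_range _).le
  · refine card_image_le.trans ?_
    rw [card_product, card_range, card_nonPrefixes]
    gcongr
    omega

lemma card_Em_ne_zero_le {m : ℕ} (hm : m ≠ 0) (x : ℕ) :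
    Nat.card {n : ℕ // n < x ∧ Em m n ≠ 0} ≤
      (m - 1) + (Nat.sqrt (2 * x) + 1) * (2 ^ (m - 1) - m) :=
  (Nat.card_coe_set_eq {n | n < x ∧ Em m n ≠ 0}).trans_le <|
    (Set.ncard_le_ncard (fun _ hn => mem_exceptionalExponents hm hn.1 hn.2) (finite_toSet _)).trans
      ((Set.ncard_coe_finset _).trans_le (card_exceptionalExponents_le m x))

/-- The nonzero coefficients of `εₘ(q)` have density zero: the number of `n < x` with
`Em m n ≠ 0` is at most `(2^{m-1} - m)(√(2x) + 1)` plus a constant depending only on `m`. -/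
theorem Em_almost_always_zero (m : ℕ) (hm : 2 ≤ m) :
    ∃ c : ℝ, ∀ x : ℕ,
      (Nat.card {n : ℕ // n < x ∧ Em m n ≠ 0} : ℝ) ≤
        ((2 : ℝ) ^ (m - 1) - m) * (Real.sqrt (2 * x) + 1) + c := by
  refine ⟨m - 1, fun x => ?_⟩
  have hpow : m ≤ 2 ^ (m - 1) := by
    have := (m - 1).lt_two_pow_self
    omega
  have hcoef : ((2 ^ (m - 1) - m : ℕ) : ℝ) = (2 : ℝ) ^ (m - 1) - m := by
    push_cast [Nat.cast_sub hpow]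
    ring
  have hcoef_nonneg : (0 : ℝ) ≤ (2 : ℝ) ^ (m - 1) - m := hcoef ▸ Nat.cast_nonneg _
  have hsqrt : (Nat.sqrt (2 * x) : ℝ) ≤ Real.sqrt (2 * x) := by
    exact_mod_cast Real.nat_sqrt_le_real_sqrt
  calc (Nat.card {n : ℕ // n < x ∧ Em m n ≠ 0} : ℝ)
      ≤ ((m - 1 : ℕ) : ℝ) + ((Nat.sqrt (2 * x) : ℝ) + 1) * ((2 : ℝ) ^ (m - 1) - m) := by
        rw [← hcoef]
        exact_mod_cast card_Em_ne_zero_le (by omega) x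
    _ ≤ ((2 : ℝ) ^ (m - 1) - m) * (Real.sqrt (2 * x) + 1) + (m - 1) := by
        rw [Nat.cast_sub (by omega), Nat.cast_one]
        nlinarith
end
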